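/- arXiv:2307.04558 — 3 statements merged into one kernel-verified Lean document; each statement's English description precedes it below -/
import Mathlib

section
/- Consider the bilinear form S(x,y) = Σ_{l=0}^{n} Σ_{m=0}^{n} s_{l−m} x_l y_m, where the given real coefficients satisfy s₀ ≥ s₁ ≥ s₂ ≥ ⋯ ≥ 0 and s_{ν} = s_{−ν}, and the variables x₀,…,xₙ ≥ 0 and y₀,…,yₘ ≥ 0 are given in every respect except arrangement (i.e., one may permute the values among the indices). Then among the arrangements (permutations of the x-values and of the y-values) for which S attains its maximum value, there is one in which (i) x_μ ≤ x_{μ'} whenever |μ' − n/2| < |μ − n/2|, and (ii) no two of the differences x_μ − x_{μ'}, where μ < μ' and |μ' − n/2| = |μ − n/2|, have different signs; and the analogous conditions hold for the y-variables. -/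
open Finset

namespace HL


def rk (n : ℕ) (p : Fin (n+1)) : ℕ :=
  if n < 2 * p.val then 2 * p.val - n - 1 else n - 2 * p.val

lemma rk_le {n : ℕ} (p : Fin (n+1)) : rk n p ≤ n := by
  have := p.isLt; unfold rk; split <;> omega

lemma rk_inj {n : ℕ} {p q : Fin (n+1)} (h : rk n p = rk n q) : p = q := by
  have hp := p.isLt; have hq := q.isLt
  unfold rk at h
  apply Fin.ext
  split at h <;> split at h <;> omega

def rkE (n : ℕ) : Fin (n+1) → Fin (n+1) := fun p => ⟨rk n p, Nat.lt_succ_of_le (rk_le p)⟩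

lemma rkE_inj (n : ℕ) : Function.Injective (rkE n) := fun _ _ h => rk_inj (congrArg Fin.val h)

lemma rk_surj (n : ℕ) (r : ℕ) (hr : r ≤ n) : ∃ p : Fin (n+1), rk n p = r := by
  obtain ⟨p, hp⟩ := (Finite.injective_iff_surjective.mp (rkE_inj n)) ⟨r, Nat.lt_succ_of_le hr⟩
  exact ⟨p, congrArg Fin.val hp⟩

noncomputable def inv (n : ℕ) (x : Fin (n+1) → ℝ) : ℕ :=
  (univ.filter fun pq : Fin (n+1) × Fin (n+1) => rk n pq.1 < rk n pq.2 ∧ x pq.1 < x pq.2).card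

lemma inv_step {n : ℕ} (x : Fin (n+1) → ℝ) (σ : Fin (n+1) → Fin (n+1))
    (hinv : ∀ p, σ (σ p) = p)
    (hadj : ∀ p, σ p ≠ p → rk n (σ p) = rk n p + 1 ∨ rk n p = rk n (σ p) + 1)
    (hswap : ∀ p, σ p ≠ p → rk n p < rk n (σ p) → x p < x (σ p)) :
    inv n (x ∘ σ) ≤ inv n x ∧ ((∃ p, σ p ≠ p) → inv n (x ∘ σ) < inv n x) := by
  have hσinj : Function.Injective σ := Function.LeftInverse.injective hinv
  have key : ∀ p q : Fin (n+1), rk n p < rk n q → x (σ p) < x (σ q) →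
      rk n (σ p) < rk n (σ q) := by
    intro p q h1 h2
    by_contra hcon
    have hpq : p ≠ q := by intro h; rw [h] at h1; omega
    have hne : rk n (σ p) ≠ rk n (σ q) := by
      intro h; exact hpq (hσinj (rk_inj h))
    have hlt : rk n (σ q) < rk n (σ p) := by omega
    have b1 : rk n (σ p) ≤ rk n p + 1 := by
      by_cases h : σ p = p
      · rw [h]; omega
      · rcases hadj p h with h' | h' <;> omega
    have b2 : rk n q ≤ rk n (σ q) + 1 := by
      by_cases h : σ q = q
      · rw [h]; omega
      · rcases hadj q h with h' | h' <;> omega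
    have e1 : rk n (σ p) = rk n q := by omega
    have e2 : rk n (σ q) = rk n p := by omega
    have hσp : σ p = q := rk_inj (by rw [e1])
    have hσpp : σ p ≠ p := by rw [hσp]; exact fun h => hpq h.symm
    have hx1 : x p < x (σ p) := hswap p hσpp (by rw [e1]; exact h1)
    have hσq : σ q = p := by rw [← hσp, hinv]
    rw [hσp, hσq] at h2
    rw [hσp] at hx1
    linarith
  have mono : ∀ pq ∈ (univ.filter fun pq : Fin (n+1) × Fin (n+1) =>
      rk n pq.1 < rk n pq.2 ∧ (x ∘ σ) pq.1 < (x ∘ σ) pq.2),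
      (σ pq.1, σ pq.2) ∈ (univ.filter fun pq : Fin (n+1) × Fin (n+1) =>
      rk n pq.1 < rk n pq.2 ∧ x pq.1 < x pq.2) := by
    intro pq hpq
    simp only [mem_filter, mem_univ, true_and, Function.comp] at hpq ⊢
    exact ⟨key pq.1 pq.2 hpq.1 hpq.2, hpq.2⟩
  have injOn : ∀ pq₁ ∈ (univ.filter fun pq : Fin (n+1) × Fin (n+1) =>
      rk n pq.1 < rk n pq.2 ∧ (x ∘ σ) pq.1 < (x ∘ σ) pq.2), ∀ pq₂ ∈ (univ.filter fun pq : Fin (n+1) × Fin (n+1) =>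
      rk n pq.1 < rk n pq.2 ∧ (x ∘ σ) pq.1 < (x ∘ σ) pq.2),
      (σ pq₁.1, σ pq₁.2) = (σ pq₂.1, σ pq₂.2) → pq₁ = pq₂ := by
    intro a _ b _ h
    have h1 : σ a.1 = σ b.1 := congrArg Prod.fst h
    have h2 : σ a.2 = σ b.2 := congrArg Prod.snd h
    exact Prod.ext (hσinj h1) (hσinj h2)
  constructor
  · exact Finset.card_le_card_of_injOn _ mono injOn
  · rintro ⟨p₀, hp₀⟩
    obtain ⟨p₁, hne₁, hlt₁⟩ : ∃ p₁, σ p₁ ≠ p₁ ∧ rk n p₁ < rk n (σ p₁) := by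
      rcases hadj p₀ hp₀ with h | h
      · exact ⟨p₀, hp₀, by omega⟩
      · refine ⟨σ p₀, by rw [hinv]; exact fun h' => hp₀ h'.symm, by rw [hinv]; omega⟩
    have hmem : (p₁, σ p₁) ∈ (univ.filter fun pq : Fin (n+1) × Fin (n+1) =>
        rk n pq.1 < rk n pq.2 ∧ x pq.1 < x pq.2) := by
      simp only [mem_filter, mem_univ, true_and]
      exact ⟨hlt₁, hswap p₁ hne₁ hlt₁⟩
    have mono' : ∀ pq ∈ (univ.filter fun pq : Fin (n+1) × Fin (n+1) =>
        rk n pq.1 < rk n pq.2 ∧ (x ∘ σ) pq.1 < (x ∘ σ) pq.2),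
        (σ pq.1, σ pq.2) ∈ ((univ.filter fun pq : Fin (n+1) × Fin (n+1) =>
        rk n pq.1 < rk n pq.2 ∧ x pq.1 < x pq.2).erase (p₁, σ p₁)) := by
      intro pq hpq
      refine Finset.mem_erase.mpr ⟨?_, mono pq hpq⟩
      intro hcon
      have e1 : σ pq.1 = p₁ := congrArg Prod.fst hcon
      have e2 : σ pq.2 = σ p₁ := congrArg Prod.snd hcon
      have e1' : pq.1 = σ p₁ := by rw [← e1, hinv]
      have e2' : pq.2 = p₁ := hσinj e2
      simp only [mem_filter, mem_univ, true_and] at hpq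
      rw [e1', e2'] at hpq
      omega
    have hcard := Finset.card_le_card_of_injOn _ mono' injOn
    have : 0 < (univ.filter fun pq : Fin (n+1) × Fin (n+1) =>
        rk n pq.1 < rk n pq.2 ∧ x pq.1 < x pq.2).card := Finset.card_pos.mpr ⟨_, hmem⟩
    rw [Finset.card_erase_of_mem hmem] at hcard
    unfold inv
    omega



variable {n : ℕ}

noncomputable def pol (ρ : Fin (n+1) → Fin (n+1)) (D : Fin (n+1) → Prop) [DecidablePred D]
    (x : Fin (n+1) → ℝ) : Fin (n+1) → ℝ :=
  fun p => if D p then max (x p) (x (ρ p)) else min (x p) (x (ρ p))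

noncomputable def swp (ρ : Fin (n+1) → Fin (n+1)) (D : Fin (n+1) → Prop) [DecidablePred D]
    (x : Fin (n+1) → ℝ) : Fin (n+1) → Fin (n+1) :=
  fun p => if (if D p then x p < x (ρ p) else x (ρ p) < x p) then ρ p else p

variable {ρ : Fin (n+1) → Fin (n+1)} {D : Fin (n+1) → Prop} [DecidablePred D] {x : Fin (n+1) → ℝ}

lemma swp_invol (hρ : ∀ p, ρ (ρ p) = p) (hD : ∀ p, ρ p ≠ p → (D p ↔ ¬ D (ρ p))) :
    ∀ p, swp ρ D x (swp ρ D x p) = p := by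
  intro p
  unfold swp
  by_cases hp : ρ p = p
  · simp [hp]
  by_cases hDp : D p
  · have hDρ : ¬ D (ρ p) := (hD p hp).mp hDp
    by_cases hlt : x p < x (ρ p)
    · simp [hDp, hlt, hDρ, hρ p]
    · simp [hDp, hlt]
  · have hDρ : D (ρ p) := by
      by_contra hc; exact hDp ((hD p hp).mpr hc)
    by_cases hlt : x (ρ p) < x p
    · simp [hDp, hlt, hDρ, hρ p]
    · simp [hDp, hlt]

lemma pol_eq_comp : pol ρ D x = x ∘ swp ρ D x := by
  funext p
  unfold pol swp Function.comp
  by_cases hDp : D p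
  · by_cases hlt : x p < x (ρ p)
    · simp [hDp, hlt, max_eq_right hlt.le]
    · simp [hDp, hlt, max_eq_left (not_lt.mp hlt)]
  · by_cases hlt : x (ρ p) < x p
    · simp [hDp, hlt, min_eq_right hlt.le]
    · simp [hDp, hlt, min_eq_left (not_lt.mp hlt)]

lemma pol_nonneg (hx : ∀ p, 0 ≤ x p) : ∀ p, 0 ≤ pol ρ D x p := by
  intro p; unfold pol; split
  · exact le_max_of_le_left (hx p)
  · exact le_min (hx p) (hx (ρ p))



lemma pol_orbit (K : Fin (n+1) → Fin (n+1) → ℝ) (x y : Fin (n+1) → ℝ)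
    (hρ : ∀ p, ρ (ρ p) = p)
    (hD : ∀ p, ρ p ≠ p → (D p ↔ ¬ D (ρ p)))
    (hDfix : ∀ p, ρ p = p → D p)
    (hK3 : ∀ p q, D p → D q → K p (ρ q) ≤ K p q)
    (hK4 : ∀ p q, ρ p ≠ p → ρ q ≠ q → K (ρ p) (ρ q) = K p q)
    (hKs : ∀ p q, K p q = K q p)
    (hx : ∀ p, 0 ≤ x p) (hy : ∀ p, 0 ≤ y p) (p q : Fin (n+1)) :
    0 ≤ K p q * (pol ρ D x p * pol ρ D y q - x p * y q)
      + K (ρ p) q * (pol ρ D x (ρ p) * pol ρ D y q - x (ρ p) * y q)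
      + K p (ρ q) * (pol ρ D x p * pol ρ D y (ρ q) - x p * y (ρ q))
      + K (ρ p) (ρ q) * (pol ρ D x (ρ p) * pol ρ D y (ρ q) - x (ρ p) * y (ρ q)) := by
  by_cases hp : ρ p = p <;> by_cases hq : ρ q = q
  · -- both fixed
    have ex : pol ρ D x p = x p := by simp [pol, hp]
    have ey : pol ρ D y q = y q := by simp [pol, hq]
    rw [hp, hq, ex, ey]
    ring_nf
    exact le_refl 0
  · -- p fixed, q moves
    have hDp : D p := hDfix p hp
    have ex : pol ρ D x p = x p := by simp [pol, hp]
    rw [hp, ex]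
    by_cases hDq : D q
    · have hDρq : ¬ D (ρ q) := (hD q hq).mp hDq
      have ey1 : pol ρ D y q = max (y q) (y (ρ q)) := by simp [pol, hDq]
      have ey2 : pol ρ D y (ρ q) = min (y (ρ q)) (y q) := by simp [pol, hDρq, hρ q]
      have hk : K p (ρ q) ≤ K p q := hK3 p q hDp hDq
      rw [ey1, ey2]
      rcases le_total (y q) (y (ρ q)) with h | h
      · rw [max_eq_right h, min_eq_right h]
        nlinarith [mul_nonneg (mul_nonneg (hx p) (sub_nonneg.mpr hk)) (sub_nonneg.mpr h)]
      · rw [max_eq_left h, min_eq_left h]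
        nlinarith
    · have hDρq : D (ρ q) := by by_contra hc; exact hDq ((hD q hq).mpr hc)
      have ey1 : pol ρ D y q = min (y q) (y (ρ q)) := by simp [pol, hDq]
      have ey2 : pol ρ D y (ρ q) = max (y (ρ q)) (y q) := by simp [pol, hDρq, hρ q]
      have hk : K p q ≤ K p (ρ q) := by
        have := hK3 p (ρ q) hDp hDρq; rwa [hρ q] at this
      rw [ey1, ey2]
      rcases le_total (y q) (y (ρ q)) with h | h
      · rw [min_eq_left h, max_eq_left h]
        nlinarith [mul_nonneg (mul_nonneg (hx p) (sub_nonneg.mpr hk)) (sub_nonneg.mpr h)]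
      · rw [min_eq_right h, max_eq_right h]
        nlinarith [mul_nonneg (mul_nonneg (hx p) (sub_nonneg.mpr hk)) (sub_nonneg.mpr h)]
  · -- q fixed, p moves
    have hDq : D q := hDfix q hq
    have ey : pol ρ D y q = y q := by simp [pol, hq]
    rw [hq, ey]
    by_cases hDp : D p
    · have hDρp : ¬ D (ρ p) := (hD p hp).mp hDp
      have ex1 : pol ρ D x p = max (x p) (x (ρ p)) := by simp [pol, hDp]
      have ex2 : pol ρ D x (ρ p) = min (x (ρ p)) (x p) := by simp [pol, hDρp, hρ p]
      have hk : K (ρ p) q ≤ K p q := by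
        calc K (ρ p) q = K q (ρ p) := hKs _ _
        _ ≤ K q p := hK3 q p hDq hDp
        _ = K p q := hKs _ _
      rw [ex1, ex2]
      rcases le_total (x p) (x (ρ p)) with h | h
      · rw [max_eq_right h, min_eq_right h]
        nlinarith [mul_nonneg (mul_nonneg (hy q) (sub_nonneg.mpr hk)) (sub_nonneg.mpr h)]
      · rw [max_eq_left h, min_eq_left h]
        nlinarith
    · have hDρp : D (ρ p) := by by_contra hc; exact hDp ((hD p hp).mpr hc)
      have ex1 : pol ρ D x p = min (x p) (x (ρ p)) := by simp [pol, hDp]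
      have ex2 : pol ρ D x (ρ p) = max (x (ρ p)) (x p) := by simp [pol, hDρp, hρ p]
      have hk : K p q ≤ K (ρ p) q := by
        have := hK3 q (ρ p) hDq hDρp
        rw [hρ p] at this
        calc K p q = K q p := hKs _ _
        _ ≤ K q (ρ p) := this
        _ = K (ρ p) q := hKs _ _
      rw [ex1, ex2]
      rcases le_total (x p) (x (ρ p)) with h | h
      · rw [min_eq_left h, max_eq_left h]
        nlinarith [mul_nonneg (mul_nonneg (hy q) (sub_nonneg.mpr hk)) (sub_nonneg.mpr h)]
      · rw [min_eq_right h, max_eq_right h]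
        nlinarith [mul_nonneg (mul_nonneg (hy q) (sub_nonneg.mpr hk)) (sub_nonneg.mpr h)]
  · -- both move
    have hk22 : K (ρ p) (ρ q) = K p q := hK4 p q hp hq
    have hρq_ne : ρ (ρ q) ≠ ρ q := by rw [hρ q]; exact fun h => hq h.symm
    have hρp_ne : ρ (ρ p) ≠ ρ p := by rw [hρ p]; exact fun h => hp h.symm
    have hk21 : K (ρ p) q = K p (ρ q) := by
      have := hK4 p (ρ q) hp hρq_ne; rwa [hρ q] at this
    rw [hk22, hk21]
    by_cases hDp : D p <;> by_cases hDq : D q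
    · have hDρp : ¬ D (ρ p) := (hD p hp).mp hDp
      have hDρq : ¬ D (ρ q) := (hD q hq).mp hDq
      have ex1 : pol ρ D x p = max (x p) (x (ρ p)) := by simp [pol, hDp]
      have ex2 : pol ρ D x (ρ p) = min (x (ρ p)) (x p) := by simp [pol, hDρp, hρ p]
      have ey1 : pol ρ D y q = max (y q) (y (ρ q)) := by simp [pol, hDq]
      have ey2 : pol ρ D y (ρ q) = min (y (ρ q)) (y q) := by simp [pol, hDρq, hρ q]
      have hk : K p (ρ q) ≤ K p q := hK3 p q hDp hDq
      rw [ex1, ex2, ey1, ey2]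
      rcases le_total (x p) (x (ρ p)) with h1 | h1 <;> rcases le_total (y q) (y (ρ q)) with h2 | h2
      · rw [max_eq_right h1, min_eq_right h1, max_eq_right h2, min_eq_right h2]; nlinarith
      · rw [max_eq_right h1, min_eq_right h1, max_eq_left h2, min_eq_left h2]
        nlinarith [mul_nonneg (mul_nonneg (sub_nonneg.mpr hk) (sub_nonneg.mpr h1)) (sub_nonneg.mpr h2)]
      · rw [max_eq_left h1, min_eq_left h1, max_eq_right h2, min_eq_right h2]
        nlinarith [mul_nonneg (mul_nonneg (sub_nonneg.mpr hk) (sub_nonneg.mpr h1)) (sub_nonneg.mpr h2)]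
      · rw [max_eq_left h1, min_eq_left h1, max_eq_left h2, min_eq_left h2]; nlinarith
    · have hDρp : ¬ D (ρ p) := (hD p hp).mp hDp
      have hDρq : D (ρ q) := by by_contra hc; exact hDq ((hD q hq).mpr hc)
      have ex1 : pol ρ D x p = max (x p) (x (ρ p)) := by simp [pol, hDp]
      have ex2 : pol ρ D x (ρ p) = min (x (ρ p)) (x p) := by simp [pol, hDρp, hρ p]
      have ey1 : pol ρ D y q = min (y q) (y (ρ q)) := by simp [pol, hDq]
      have ey2 : pol ρ D y (ρ q) = max (y (ρ q)) (y q) := by simp [pol, hDρq, hρ q]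
      have hk : K p q ≤ K p (ρ q) := by
        have := hK3 p (ρ q) hDp hDρq; rwa [hρ q] at this
      rw [ex1, ex2, ey1, ey2]
      rcases le_total (x p) (x (ρ p)) with h1 | h1 <;> rcases le_total (y q) (y (ρ q)) with h2 | h2
      · rw [max_eq_right h1, min_eq_right h1, min_eq_left h2, max_eq_left h2]
        nlinarith [mul_nonneg (mul_nonneg (sub_nonneg.mpr hk) (sub_nonneg.mpr h1)) (sub_nonneg.mpr h2)]
      · rw [max_eq_right h1, min_eq_right h1, min_eq_right h2, max_eq_right h2]; nlinarith
      · rw [max_eq_left h1, min_eq_left h1, min_eq_left h2, max_eq_left h2]; nlinarith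
      · rw [max_eq_left h1, min_eq_left h1, min_eq_right h2, max_eq_right h2]
        nlinarith [mul_nonneg (mul_nonneg (sub_nonneg.mpr hk) (sub_nonneg.mpr h1)) (sub_nonneg.mpr h2)]
    · have hDρp : D (ρ p) := by by_contra hc; exact hDp ((hD p hp).mpr hc)
      have hDρq : ¬ D (ρ q) := (hD q hq).mp hDq
      have ex1 : pol ρ D x p = min (x p) (x (ρ p)) := by simp [pol, hDp]
      have ex2 : pol ρ D x (ρ p) = max (x (ρ p)) (x p) := by simp [pol, hDρp, hρ p]
      have ey1 : pol ρ D y q = max (y q) (y (ρ q)) := by simp [pol, hDq]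
      have ey2 : pol ρ D y (ρ q) = min (y (ρ q)) (y q) := by simp [pol, hDρq, hρ q]
      have hk : K p q ≤ K p (ρ q) := by
        have := hK3 (ρ p) q hDρp hDq
        rw [hk21, hk22] at this
        exact this
      rw [ex1, ex2, ey1, ey2]
      rcases le_total (x p) (x (ρ p)) with h1 | h1 <;> rcases le_total (y q) (y (ρ q)) with h2 | h2
      · rw [min_eq_left h1, max_eq_left h1, max_eq_right h2, min_eq_right h2]
        nlinarith [mul_nonneg (mul_nonneg (sub_nonneg.mpr hk) (sub_nonneg.mpr h1)) (sub_nonneg.mpr h2)]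
      · rw [min_eq_left h1, max_eq_left h1, max_eq_left h2, min_eq_left h2]; nlinarith
      · rw [min_eq_right h1, max_eq_right h1, max_eq_right h2, min_eq_right h2]; nlinarith
      · rw [min_eq_right h1, max_eq_right h1, max_eq_left h2, min_eq_left h2]
        nlinarith [mul_nonneg (mul_nonneg (sub_nonneg.mpr hk) (sub_nonneg.mpr h1)) (sub_nonneg.mpr h2)]
    · have hDρp : D (ρ p) := by by_contra hc; exact hDp ((hD p hp).mpr hc)
      have hDρq : D (ρ q) := by by_contra hc; exact hDq ((hD q hq).mpr hc)
      have ex1 : pol ρ D x p = min (x p) (x (ρ p)) := by simp [pol, hDp]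
      have ex2 : pol ρ D x (ρ p) = max (x (ρ p)) (x p) := by simp [pol, hDρp, hρ p]
      have ey1 : pol ρ D y q = min (y q) (y (ρ q)) := by simp [pol, hDq]
      have ey2 : pol ρ D y (ρ q) = max (y (ρ q)) (y q) := by simp [pol, hDρq, hρ q]
      have hk : K p (ρ q) ≤ K p q := by
        have := hK3 (ρ p) (ρ q) hDρp hDρq
        rw [hρ q, hk21, hk22] at this
        exact this
      rw [ex1, ex2, ey1, ey2]
      rcases le_total (x p) (x (ρ p)) with h1 | h1 <;> rcases le_total (y q) (y (ρ q)) with h2 | h2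
      · rw [min_eq_left h1, max_eq_left h1, min_eq_left h2, max_eq_left h2]
        nlinarith [mul_nonneg (mul_nonneg (sub_nonneg.mpr hk) (sub_nonneg.mpr h1)) (sub_nonneg.mpr h2)]
      · rw [min_eq_left h1, max_eq_left h1, min_eq_right h2, max_eq_right h2]
        nlinarith [mul_nonneg (mul_nonneg (sub_nonneg.mpr hk) (sub_nonneg.mpr h1)) (sub_nonneg.mpr h2)]
      · rw [min_eq_right h1, max_eq_right h1, min_eq_left h2, max_eq_left h2]
        nlinarith [mul_nonneg (mul_nonneg (sub_nonneg.mpr hk) (sub_nonneg.mpr h1)) (sub_nonneg.mpr h2)]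
      · rw [min_eq_right h1, max_eq_right h1, min_eq_right h2, max_eq_right h2]
        nlinarith [mul_nonneg (mul_nonneg (sub_nonneg.mpr hk) (sub_nonneg.mpr h1)) (sub_nonneg.mpr h2)]

lemma pol_le (K : Fin (n+1) → Fin (n+1) → ℝ) (x y : Fin (n+1) → ℝ)
    (hρ : ∀ p, ρ (ρ p) = p)
    (hD : ∀ p, ρ p ≠ p → (D p ↔ ¬ D (ρ p)))
    (hDfix : ∀ p, ρ p = p → D p)
    (hK3 : ∀ p q, D p → D q → K p (ρ q) ≤ K p q)
    (hK4 : ∀ p q, ρ p ≠ p → ρ q ≠ q → K (ρ p) (ρ q) = K p q)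
    (hKs : ∀ p q, K p q = K q p)
    (hx : ∀ p, 0 ≤ x p) (hy : ∀ p, 0 ≤ y p) :
    ∑ p, ∑ q, K p q * x p * y q ≤ ∑ p, ∑ q, K p q * pol ρ D x p * pol ρ D y q := by
  have hinvol : Function.Involutive ρ := hρ
  set E : Equiv.Perm (Fin (n+1)) := hinvol.toPerm with hE
  have hEapp : ∀ p, E p = ρ p := fun p => rfl
  set F : Fin (n+1) → Fin (n+1) → ℝ :=
    fun p q => K p q * (pol ρ D x p * pol ρ D y q - x p * y q) with hF
  have h1 : ∑ p, ∑ q, F (ρ p) q = ∑ p, ∑ q, F p q := by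
    exact Equiv.sum_comp E (fun p => ∑ q, F p q)
  have h2 : ∑ p, ∑ q, F p (ρ q) = ∑ p, ∑ q, F p q := by
    refine Finset.sum_congr rfl fun p _ => ?_
    exact Equiv.sum_comp E (F p)
  have h3 : ∑ p, ∑ q, F (ρ p) (ρ q) = ∑ p, ∑ q, F p q := by
    calc ∑ p, ∑ q, F (ρ p) (ρ q) = ∑ p, ∑ q, F p (ρ q) :=
          Equiv.sum_comp E (fun p => ∑ q, F p (ρ q))
      _ = ∑ p, ∑ q, F p q := h2
  have key : 0 ≤ ∑ p, ∑ q, (F p q + F (ρ p) q + F p (ρ q) + F (ρ p) (ρ q)) := by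
    refine Finset.sum_nonneg fun p _ => Finset.sum_nonneg fun q _ => ?_
    exact pol_orbit K x y hρ hD hDfix hK3 hK4 hKs hx hy p q
  have expand : ∑ p, ∑ q, (F p q + F (ρ p) q + F p (ρ q) + F (ρ p) (ρ q))
      = (∑ p, ∑ q, F p q) + (∑ p, ∑ q, F (ρ p) q) + (∑ p, ∑ q, F p (ρ q))
        + (∑ p, ∑ q, F (ρ p) (ρ q)) := by
    simp [Finset.sum_add_distrib]
  rw [expand, h1, h2, h3] at key
  have hFsum : ∑ p, ∑ q, F p q
      = (∑ p, ∑ q, K p q * pol ρ D x p * pol ρ D y q) - ∑ p, ∑ q, K p q * x p * y q := by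
    rw [← Finset.sum_sub_distrib]
    refine Finset.sum_congr rfl fun p _ => ?_
    rw [← Finset.sum_sub_distrib]
    refine Finset.sum_congr rfl fun q _ => ?_
    rw [hF]; ring
  rw [hFsum] at key
  linarith



def r1 (n : ℕ) (p : Fin (n+1)) : Fin (n+1) := ⟨n - p.val, by omega⟩
def r2 (n : ℕ) (p : Fin (n+1)) : Fin (n+1) :=
  ⟨if p.val = 0 then 0 else n + 1 - p.val, by split <;> omega⟩
def D1 (n : ℕ) (p : Fin (n+1)) : Prop := n ≤ 2 * p.val
def D2 (n : ℕ) (p : Fin (n+1)) : Prop := 2 * p.val ≤ n + 1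

instance (n : ℕ) : DecidablePred (D1 n) := fun _ => Nat.decLe _ _
instance (n : ℕ) : DecidablePred (D2 n) := fun _ => Nat.decLe _ _


lemma fin_ne_val {p q : Fin (n+1)} (h : p ≠ q) : p.val ≠ q.val := fun h' => h (Fin.ext h')

lemma r1_val (p : Fin (n+1)) : (r1 n p).val = n - p.val := rfl

lemma r2_eq_self {p : Fin (n+1)} (h0 : p.val = 0) : r2 n p = p := by
  apply Fin.ext; simp [r2, h0]

lemma r2_val {p : Fin (n+1)} (h0 : p.val ≠ 0) : (r2 n p).val = n + 1 - p.val := by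
  simp [r2, h0]

lemma r1_invol : ∀ p : Fin (n+1), r1 n (r1 n p) = p := by
  intro p; have := p.isLt; apply Fin.ext; simp [r1]; omega

lemma r2_invol : ∀ p : Fin (n+1), r2 n (r2 n p) = p := by
  intro p; have := p.isLt; apply Fin.ext; simp only [r2]; split <;> split <;> omega

lemma r1_hD : ∀ p : Fin (n+1), r1 n p ≠ p → (D1 n p ↔ ¬ D1 n (r1 n p)) := by
  intro p h
  have hv := fin_ne_val h
  have := p.isLt
  simp only [r1, D1] at *
  omega

lemma r2_hD : ∀ p : Fin (n+1), r2 n p ≠ p → (D2 n p ↔ ¬ D2 n (r2 n p)) := by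
  intro p h
  by_cases h0 : p.val = 0
  · exact absurd (r2_eq_self h0) h
  have hv := fin_ne_val h
  have h2 := r2_val (n := n) h0
  have := p.isLt
  simp only [D2, h2] at *
  omega

lemma r1_hDfix : ∀ p : Fin (n+1), r1 n p = p → D1 n p := by
  intro p h
  have hv : (r1 n p).val = p.val := congrArg Fin.val h
  have := p.isLt
  simp only [r1, D1] at *
  omega

lemma r2_hDfix : ∀ p : Fin (n+1), r2 n p = p → D2 n p := by
  intro p h
  by_cases h0 : p.val = 0
  · simp [D2, h0]
  have hv : (r2 n p).val = p.val := congrArg Fin.val h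
  rw [r2_val h0] at hv
  have := p.isLt
  simp only [D2]
  omega

lemma r1_hadj : ∀ p : Fin (n+1), r1 n p ≠ p →
    rk n (r1 n p) = rk n p + 1 ∨ rk n p = rk n (r1 n p) + 1 := by
  intro p h
  have hv := fin_ne_val h
  have := p.isLt
  have e := r1_val p
  simp only [rk] at *
  generalize (r1 n p).val = k at *
  split <;> split <;> omega

lemma r2_hadj : ∀ p : Fin (n+1), r2 n p ≠ p →
    rk n (r2 n p) = rk n p + 1 ∨ rk n p = rk n (r2 n p) + 1 := by
  intro p h
  by_cases h0 : p.val = 0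
  · exact absurd (r2_eq_self h0) h
  have hv := fin_ne_val h
  have := p.isLt
  simp only [rk, r2_val h0] at *
  split <;> split <;> omega

lemma r1_hdom : ∀ p : Fin (n+1), r1 n p ≠ p → rk n p < rk n (r1 n p) → D1 n p := by
  intro p h hr
  have hv := fin_ne_val h
  have := p.isLt
  have e := r1_val p
  simp only [rk, D1] at *
  generalize (r1 n p).val = k at *
  split at hr <;> split at hr <;> omega

lemma r2_hdom : ∀ p : Fin (n+1), r2 n p ≠ p → rk n p < rk n (r2 n p) → D2 n p := by
  intro p h hr
  by_cases h0 : p.val = 0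
  · exact absurd (r2_eq_self h0) h
  have hv := fin_ne_val h
  have := p.isLt
  simp only [rk, r2_val h0, D2] at *
  split at hr <;> split at hr <;> omega

noncomputable def Kf (n : ℕ) (s : ℕ → ℝ) : Fin (n+1) → Fin (n+1) → ℝ :=
  fun p q => s ((p : ℤ) - (q : ℤ)).natAbs

lemma fin_int_val (p : Fin (n+1)) : (p : ℤ) = (p.val : ℤ) := rfl

lemma Kf_symm (s : ℕ → ℝ) : ∀ p q : Fin (n+1), Kf n s p q = Kf n s q p := by
  intro p q
  unfold Kf
  congr 1
  omega

lemma r1_hK3 (s : ℕ → ℝ) (hs : Antitone s) :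
    ∀ p q : Fin (n+1), D1 n p → D1 n q → Kf n s p (r1 n q) ≤ Kf n s p q := by
  intro p q hp hq
  apply hs
  have h3 : ((r1 n q : ℤ)) = ((n - q.val : ℕ) : ℤ) := rfl
  have := p.isLt; have := q.isLt
  simp only [D1] at hp hq
  rw [h3]
  omega

lemma r2_hK3 (s : ℕ → ℝ) (hs : Antitone s) :
    ∀ p q : Fin (n+1), D2 n p → D2 n q → Kf n s p (r2 n q) ≤ Kf n s p q := by
  intro p q hp hq
  by_cases h0 : q.val = 0
  · rw [r2_eq_self h0]
  apply hs
  have h3 : (((r2 n q).val : ℕ) : ℤ) = ((n + 1 - q.val : ℕ) : ℤ) :=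
    congrArg (Nat.cast : ℕ → ℤ) (r2_val h0)
  have := p.isLt; have := q.isLt
  simp only [D2] at hp hq
  omega

lemma r1_hK4 (s : ℕ → ℝ) : ∀ p q : Fin (n+1), r1 n p ≠ p → r1 n q ≠ q →
    Kf n s (r1 n p) (r1 n q) = Kf n s p q := by
  intro p q _ _
  unfold Kf
  congr 1
  have h3 : ((r1 n p : ℤ)) = ((n - p.val : ℕ) : ℤ) := rfl
  have h4 : ((r1 n q : ℤ)) = ((n - q.val : ℕ) : ℤ) := rfl
  have := p.isLt; have := q.isLt
  rw [h3, h4]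
  omega

lemma r2_hK4 (s : ℕ → ℝ) : ∀ p q : Fin (n+1), r2 n p ≠ p → r2 n q ≠ q →
    Kf n s (r2 n p) (r2 n q) = Kf n s p q := by
  intro p q hp hq
  by_cases hp0 : p.val = 0
  · exact absurd (r2_eq_self hp0) hp
  by_cases hq0 : q.val = 0
  · exact absurd (r2_eq_self hq0) hq
  unfold Kf
  congr 1
  have h3 : (((r2 n p).val : ℕ) : ℤ) = ((n + 1 - p.val : ℕ) : ℤ) :=
    congrArg (Nat.cast : ℕ → ℤ) (r2_val hp0)
  have h4 : (((r2 n q).val : ℕ) : ℤ) = ((n + 1 - q.val : ℕ) : ℤ) :=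
    congrArg (Nat.cast : ℕ → ℤ) (r2_val hq0)
  have := p.isLt; have := q.isLt
  omega


lemma swp_ne {p : Fin (n+1)} (h : swp ρ D x p ≠ p) :
    swp ρ D x p = ρ p ∧ ρ p ≠ p ∧ (D p → x p < x (ρ p)) := by
  unfold swp at h ⊢
  by_cases hc : (if D p then x p < x (ρ p) else x (ρ p) < x p)
  · rw [if_pos hc] at h ⊢
    refine ⟨rfl, h, fun hDp => ?_⟩
    rwa [if_pos hDp] at hc
  · rw [if_neg hc] at h
    exact absurd rfl h

lemma pstep (hρ : ∀ p, ρ (ρ p) = p)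
    (hD : ∀ p, ρ p ≠ p → (D p ↔ ¬ D (ρ p)))
    (hadj : ∀ p, ρ p ≠ p → rk n (ρ p) = rk n p + 1 ∨ rk n p = rk n (ρ p) + 1)
    (hdom : ∀ p, ρ p ≠ p → rk n p < rk n (ρ p) → D p)
    (x : Fin (n+1) → ℝ) :
    (∃ π : Equiv.Perm (Fin (n+1)), pol ρ D x = x ∘ π) ∧
    inv n (pol ρ D x) ≤ inv n x ∧ (pol ρ D x ≠ x → inv n (pol ρ D x) < inv n x) := by
  have hinv : Function.Involutive (swp ρ D x) := swp_invol hρ hD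
  have hadjσ : ∀ p, swp ρ D x p ≠ p →
      rk n (swp ρ D x p) = rk n p + 1 ∨ rk n p = rk n (swp ρ D x p) + 1 := by
    intro p h
    obtain ⟨he, hne, _⟩ := swp_ne h
    rw [he]
    exact hadj p hne
  have hswapσ : ∀ p, swp ρ D x p ≠ p → rk n p < rk n (swp ρ D x p) → x p < x (swp ρ D x p) := by
    intro p h hr
    obtain ⟨he, hne, hlt⟩ := swp_ne h
    rw [he] at hr ⊢
    exact hlt (hdom p hne hr)
  have hstep := inv_step x (swp ρ D x) hinv hadjσ hswapσ
  rw [← pol_eq_comp] at hstep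
  refine ⟨⟨Function.Involutive.toPerm _ hinv, ?_⟩, hstep.1, ?_⟩
  · rw [pol_eq_comp]; rfl
  · intro hne
    refine hstep.2 ?_
    by_contra hno
    push_neg at hno
    refine hne ?_
    rw [pol_eq_comp]
    funext p
    simp [Function.comp, hno p]

lemma pair_of_adj {p q : Fin (n+1)} (h : rk n q = rk n p + 1) :
    (q = r1 n p ∧ D1 n p) ∨ (q = r2 n p ∧ D2 n p ∧ p.val ≠ 0) := by
  have hp := p.isLt
  have hq := q.isLt
  have hval : (q.val + p.val = n ∧ n ≤ 2*p.val)
      ∨ (q.val + p.val = n+1 ∧ 2*p.val ≤ n+1 ∧ p.val ≠ 0) := by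
    simp only [rk] at h
    split at h <;> split at h <;> omega
  rcases hval with ⟨h1, h2⟩ | ⟨h1, h2, h3⟩
  · exact Or.inl ⟨Fin.ext (by rw [r1_val]; omega), h2⟩
  · exact Or.inr ⟨Fin.ext (by rw [r2_val h3]; omega), h2, h3⟩

lemma adj_le (x : Fin (n+1) → ℝ) (h1 : pol (r1 n) (D1 n) x = x) (h2 : pol (r2 n) (D2 n) x = x)
    {p q : Fin (n+1)} (h : rk n q = rk n p + 1) : x q ≤ x p := by
  rcases pair_of_adj h with ⟨hq, hDp⟩ | ⟨hq, hDp, _⟩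
  · have hcf := congrFun h1 p
    unfold pol at hcf
    rw [if_pos hDp] at hcf
    rw [hq]
    exact max_eq_left_iff.mp hcf
  · have hcf := congrFun h2 p
    unfold pol at hcf
    rw [if_pos hDp] at hcf
    rw [hq]
    exact max_eq_left_iff.mp hcf

lemma rank_antitone_of_fixed (x : Fin (n+1) → ℝ)
    (h1 : pol (r1 n) (D1 n) x = x) (h2 : pol (r2 n) (D2 n) x = x) :
    ∀ p q : Fin (n+1), rk n p ≤ rk n q → x q ≤ x p := by
  have key : ∀ (t : ℕ) (p q : Fin (n+1)), rk n q = rk n p + t → x q ≤ x p := by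
    intro t
    induction t with
    | zero =>
      intro p q h
      have : q = p := rk_inj (by omega)
      rw [this]
    | succ t ih =>
      intro p q h
      obtain ⟨w, hw⟩ := rk_surj n (rk n p + t) (by have := rk_le q; omega)
      exact le_trans (adj_le x h1 h2 (by omega)) (ih p w hw)
  intro p q h
  exact key (rk n q - rk n p) p q (by omega)

lemma uniq (u v : Fin (n+1) → ℝ)
    (hu : ∀ p q, rk n p ≤ rk n q → u q ≤ u p)
    (hv : ∀ p q, rk n p ≤ rk n q → v q ≤ v p)
    (π : Equiv.Perm (Fin (n+1))) (h : v = u ∘ π) : v = u := by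
  have hbij : Function.Bijective (rkE n) := Finite.injective_iff_bijective.mp (rkE_inj n)
  set e : Fin (n+1) ≃ Fin (n+1) := Equiv.ofBijective _ hbij with he
  set m : Fin (n+1) ≃ Fin (n+1) := (Fin.revPerm).trans e.symm with hm
  have hrk : ∀ i : Fin (n+1), rk n (m i) = n - i.val := by
    intro i
    have h1 : e (m i) = Fin.revPerm i := by
      rw [hm]
      exact e.apply_symm_apply _
    have h2 : rk n (m i) = (Fin.revPerm i).val := congrArg Fin.val h1
    rw [h2]
    simp [Fin.val_rev]
  have hmono_u : Monotone (u ∘ m) := by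
    intro i j hij
    exact hu (m j) (m i) (by rw [hrk, hrk]; have : i.val ≤ j.val := hij; omega)
  have hmono_v : Monotone (v ∘ m) := by
    intro i j hij
    exact hv (m j) (m i) (by rw [hrk, hrk]; have : i.val ≤ j.val := hij; omega)
  have hveq : v ∘ ⇑m = u ∘ ⇑(m.trans π) := by
    rw [h]
    funext i
    simp [Equiv.trans_apply, Function.comp]
  have huniq : u ∘ ⇑(m.trans π) = u ∘ ⇑m :=
    Tuple.unique_monotone (by rw [← hveq]; exact hmono_v) hmono_u
  have hfin : v ∘ ⇑m = u ∘ ⇑m := by rw [hveq, huniq]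
  funext p
  have := congrFun hfin (m.symm p)
  simpa [Function.comp, Equiv.apply_symm_apply] using this

noncomputable def SB (n : ℕ) (s : ℕ → ℝ) (x y : Fin (n+1) → ℝ) : ℝ :=
  ∑ p, ∑ q, Kf n s p q * x p * y q

lemma iter (s : ℕ → ℝ) (hs : Antitone s) :
    ∀ (m : ℕ) (x y : Fin (n+1) → ℝ), (∀ p, 0 ≤ x p) → (∀ p, 0 ≤ y p) →
      inv n x + inv n y ≤ m →
      ∃ πx πy : Equiv.Perm (Fin (n+1)),
        (∀ p q, rk n p ≤ rk n q → (x ∘ πx) q ≤ (x ∘ πx) p) ∧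
        (∀ p q, rk n p ≤ rk n q → (y ∘ πy) q ≤ (y ∘ πy) p) ∧
        SB n s x y ≤ SB n s (x ∘ πx) (y ∘ πy) := by
  intro m
  induction m using Nat.strong_induction_on with
  | _ m ih =>
  intro x y hx hy hm
  by_cases hA : pol (r1 n) (D1 n) x = x ∧ pol (r1 n) (D1 n) y = y
      ∧ pol (r2 n) (D2 n) x = x ∧ pol (r2 n) (D2 n) y = y
  · obtain ⟨hA1, hA2, hA3, hA4⟩ := hA
    refine ⟨1, 1, ?_, ?_, ?_⟩
    · intro p q h
      simpa using rank_antitone_of_fixed x hA1 hA3 p q h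
    · intro p q h
      simpa using rank_antitone_of_fixed y hA2 hA4 p q h
    · have e1 : x ∘ ⇑(1 : Equiv.Perm (Fin (n+1))) = x := by funext p; simp
      have e2 : y ∘ ⇑(1 : Equiv.Perm (Fin (n+1))) = y := by funext p; simp
      rw [e1, e2]
  · by_cases hB : pol (r1 n) (D1 n) x = x ∧ pol (r1 n) (D1 n) y = y
    · -- use r2
      have hne : pol (r2 n) (D2 n) x ≠ x ∨ pol (r2 n) (D2 n) y ≠ y := by tauto
      obtain ⟨⟨πx1, hπx1⟩, hix1, hix2⟩ :=
        pstep (ρ := r2 n) (D := D2 n) r2_invol r2_hD r2_hadj r2_hdom x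
      obtain ⟨⟨πy1, hπy1⟩, hiy1, hiy2⟩ :=
        pstep (ρ := r2 n) (D := D2 n) r2_invol r2_hD r2_hadj r2_hdom y
      have hSle : SB n s x y ≤ SB n s (pol (r2 n) (D2 n) x) (pol (r2 n) (D2 n) y) :=
        pol_le (Kf n s) x y r2_invol r2_hD r2_hDfix (r2_hK3 s hs) (r2_hK4 s) (Kf_symm s) hx hy
      have hdec : inv n (pol (r2 n) (D2 n) x) + inv n (pol (r2 n) (D2 n) y)
          < inv n x + inv n y := by
        rcases hne with h | h
        · have := hix2 h; omega
        · have := hiy2 h; omega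
      obtain ⟨πx', πy', ha1, ha2, hS'⟩ :=
        ih (inv n (pol (r2 n) (D2 n) x) + inv n (pol (r2 n) (D2 n) y)) (by omega)
          (pol (r2 n) (D2 n) x) (pol (r2 n) (D2 n) y)
          (pol_nonneg hx) (pol_nonneg hy) le_rfl
      have hfx : x ∘ ⇑(πx'.trans πx1) = (pol (r2 n) (D2 n) x) ∘ ⇑πx' := by
        rw [hπx1]; funext p; simp [Equiv.trans_apply, Function.comp]
      have hfy : y ∘ ⇑(πy'.trans πy1) = (pol (r2 n) (D2 n) y) ∘ ⇑πy' := by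
        rw [hπy1]; funext p; simp [Equiv.trans_apply, Function.comp]
      refine ⟨πx'.trans πx1, πy'.trans πy1, ?_, ?_, ?_⟩
      · intro p q h; rw [hfx]; exact ha1 p q h
      · intro p q h; rw [hfy]; exact ha2 p q h
      · rw [hfx, hfy]; exact le_trans hSle hS'
    · -- use r1
      have hne : pol (r1 n) (D1 n) x ≠ x ∨ pol (r1 n) (D1 n) y ≠ y := by tauto
      obtain ⟨⟨πx1, hπx1⟩, hix1, hix2⟩ :=
        pstep (ρ := r1 n) (D := D1 n) r1_invol r1_hD r1_hadj r1_hdom x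
      obtain ⟨⟨πy1, hπy1⟩, hiy1, hiy2⟩ :=
        pstep (ρ := r1 n) (D := D1 n) r1_invol r1_hD r1_hadj r1_hdom y
      have hSle : SB n s x y ≤ SB n s (pol (r1 n) (D1 n) x) (pol (r1 n) (D1 n) y) :=
        pol_le (Kf n s) x y r1_invol r1_hD r1_hDfix (r1_hK3 s hs) (r1_hK4 s) (Kf_symm s) hx hy
      have hdec : inv n (pol (r1 n) (D1 n) x) + inv n (pol (r1 n) (D1 n) y)
          < inv n x + inv n y := by
        rcases hne with h | h
        · have := hix2 h; omega
        · have := hiy2 h; omega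
      obtain ⟨πx', πy', ha1, ha2, hS'⟩ :=
        ih (inv n (pol (r1 n) (D1 n) x) + inv n (pol (r1 n) (D1 n) y)) (by omega)
          (pol (r1 n) (D1 n) x) (pol (r1 n) (D1 n) y)
          (pol_nonneg hx) (pol_nonneg hy) le_rfl
      have hfx : x ∘ ⇑(πx'.trans πx1) = (pol (r1 n) (D1 n) x) ∘ ⇑πx' := by
        rw [hπx1]; funext p; simp [Equiv.trans_apply, Function.comp]
      have hfy : y ∘ ⇑(πy'.trans πy1) = (pol (r1 n) (D1 n) y) ∘ ⇑πy' := by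
        rw [hπy1]; funext p; simp [Equiv.trans_apply, Function.comp]
      refine ⟨πx'.trans πx1, πy'.trans πy1, ?_, ?_, ?_⟩
      · intro p q h; rw [hfx]; exact ha1 p q h
      · intro p q h; rw [hfy]; exact ha2 p q h
      · rw [hfx, hfy]; exact le_trans hSle hS'

lemma abs_lt_rank {μ μ' : Fin (n+1)}
    (h : |(μ' : ℝ) - n / 2| < |(μ : ℝ) - n / 2|) : rk n μ' ≤ rk n μ := by
  have h2 : |2 * ((μ' : ℝ) - n / 2)| < |2 * ((μ : ℝ) - n / 2)| := by
    rw [abs_mul, abs_mul]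
    have h22 : |(2:ℝ)| = 2 := by norm_num
    rw [h22]
    linarith
  have e1 : (2:ℝ) * ((μ' : ℝ) - n / 2) = ((2 * (μ'.val : ℤ) - n : ℤ) : ℝ) := by
    push_cast; ring
  have e2 : (2:ℝ) * ((μ : ℝ) - n / 2) = ((2 * (μ.val : ℤ) - n : ℤ) : ℝ) := by
    push_cast; ring
  rw [e1, e2, ← Int.cast_abs, ← Int.cast_abs] at h2
  have h3 : |2 * (μ'.val : ℤ) - n| < |2 * (μ.val : ℤ) - n| := by exact_mod_cast h2
  have hμ := μ.isLt
  have hμ' := μ'.isLt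
  simp only [rk]
  rw [Int.abs_eq_natAbs, Int.abs_eq_natAbs] at h3
  split <;> split <;> omega

lemma abs_eq_sum {μ μ' : Fin (n+1)} (hlt : μ < μ')
    (h : |(μ' : ℝ) - n / 2| = |(μ : ℝ) - n / 2|) : μ.val + μ'.val = n := by
  rcases abs_eq_abs.mp h with h1 | h1
  · exfalso
    have hr : (μ' : ℝ) = (μ : ℝ) := by linarith
    have hv : μ'.val = μ.val := by exact_mod_cast hr
    have := Fin.lt_def.mp hlt
    omega
  · have hr : (μ : ℝ) + (μ' : ℝ) = n := by linarith
    exact_mod_cast hr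

lemma mirror_rank {ν ν' : Fin (n+1)} (hlt : ν < ν') (hsum : ν.val + ν'.val = n) :
    rk n ν' ≤ rk n ν := by
  have := Fin.lt_def.mp hlt
  simp only [rk]
  split <;> split <;> omega

end HL

open Finset


/-- **Hardy–Littlewood maximum rearrangement theorem for bilinear forms.**
Consider `S(x, y) = ∑_{l=0}^{n} ∑_{m=0}^{n} s_{l-m} x_l y_m` where the symmetric kernel
satisfies `s₀ ≥ s₁ ≥ ⋯ ≥ 0` (encoded by `s : ℕ → ℝ` antitone and nonnegative, applied at
`|l - m|`), and the values `x_l ≥ 0`, `y_m ≥ 0` are given except for their arrangement.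
Then among the arrangements (permutations `σ` of the `x`-values and `τ` of the `y`-values)
maximizing `S`, there is one in which
(i) `x_μ ≤ x_{μ'}` whenever `|μ' - n/2| < |μ - n/2|`, and
(ii) no two of the differences `x_μ - x_{μ'}` with `μ < μ'`, `|μ' - n/2| = |μ - n/2|` have
different signs; and the analogous conditions hold for the `y`-variables. -/
theorem hardy_littlewood_max_rearrangement (n : ℕ) (s : ℕ → ℝ)
    (hs_anti : Antitone s) (hs_nonneg : ∀ ν, 0 ≤ s ν)
    (x y : Fin (n + 1) → ℝ) (hx : ∀ l, 0 ≤ x l) (hy : ∀ m, 0 ≤ y m) :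
    ∃ σ τ : Equiv.Perm (Fin (n + 1)),
      (∀ σ' τ' : Equiv.Perm (Fin (n + 1)),
        ∑ l : Fin (n + 1), ∑ m : Fin (n + 1),
            s ((l : ℤ) - (m : ℤ)).natAbs * x (σ' l) * y (τ' m)
          ≤ ∑ l : Fin (n + 1), ∑ m : Fin (n + 1),
            s ((l : ℤ) - (m : ℤ)).natAbs * x (σ l) * y (τ m)) ∧
      (∀ μ μ' : Fin (n + 1),
        |(μ' : ℝ) - n / 2| < |(μ : ℝ) - n / 2| → x (σ μ) ≤ x (σ μ')) ∧
      (∀ μ μ' ν ν' : Fin (n + 1), μ < μ' → ν < ν' →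
        |(μ' : ℝ) - n / 2| = |(μ : ℝ) - n / 2| → |(ν' : ℝ) - n / 2| = |(ν : ℝ) - n / 2| →
        ¬(x (σ μ) - x (σ μ') < 0 ∧ 0 < x (σ ν) - x (σ ν'))) ∧
      (∀ μ μ' : Fin (n + 1),
        |(μ' : ℝ) - n / 2| < |(μ : ℝ) - n / 2| → y (τ μ) ≤ y (τ μ')) ∧
      (∀ μ μ' ν ν' : Fin (n + 1), μ < μ' → ν < ν' →
        |(μ' : ℝ) - n / 2| = |(μ : ℝ) - n / 2| → |(ν' : ℝ) - n / 2| = |(ν : ℝ) - n / 2| →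
        ¬(y (τ μ) - y (τ μ') < 0 ∧ 0 < y (τ ν) - y (τ ν'))) := by
  obtain ⟨πx, πy, hax, hay, hS⟩ :=
    HL.iter s hs_anti (HL.inv n x + HL.inv n y) x y hx hy le_rfl
  refine ⟨πx, πy, ?_, ?_, ?_, ?_, ?_⟩
  · intro σ' τ'
    obtain ⟨π2x, π2y, hax2, hay2, hS2⟩ :=
      HL.iter s hs_anti (HL.inv n (x ∘ σ') + HL.inv n (y ∘ τ')) (x ∘ σ') (y ∘ τ')
        (fun p => hx _) (fun p => hy _) le_rfl
    have hxeq : (x ∘ ⇑σ') ∘ ⇑π2x = x ∘ ⇑πx := by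
      refine HL.uniq (x ∘ ⇑πx) ((x ∘ ⇑σ') ∘ ⇑π2x) hax hax2
        ((π2x.trans σ').trans πx.symm) ?_
      funext p
      simp [Function.comp, Equiv.trans_apply, Equiv.apply_symm_apply]
    have hyeq : (y ∘ ⇑τ') ∘ ⇑π2y = y ∘ ⇑πy := by
      refine HL.uniq (y ∘ ⇑πy) ((y ∘ ⇑τ') ∘ ⇑π2y) hay hay2
        ((π2y.trans τ').trans πy.symm) ?_
      funext p
      simp [Function.comp, Equiv.trans_apply, Equiv.apply_symm_apply]
    show HL.SB n s (x ∘ ⇑σ') (y ∘ ⇑τ') ≤ HL.SB n s (x ∘ ⇑πx) (y ∘ ⇑πy)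
    rw [← hxeq, ← hyeq]
    exact hS2
  · intro μ μ' h
    exact hax μ' μ (HL.abs_lt_rank h)
  · rintro μ μ' ν ν' hμ hν h1 h2 ⟨hc1, hc2⟩
    have hsum := HL.abs_eq_sum hν h2
    have hle := hax ν' ν (HL.mirror_rank hν hsum)
    simp only [Function.comp] at hle
    linarith
  · intro μ μ' h
    exact hay μ' μ (HL.abs_lt_rank h)
  · rintro μ μ' ν ν' hμ hν h1 h2 ⟨hc1, hc2⟩
    have hsum := HL.abs_eq_sum hν h2
    have hle := hay ν' ν (HL.mirror_rank hν hsum)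
    simp only [Function.comp] at hle
    linarith
end

section
/- Let s₀ ≥ s₁ ≥ ⋯ ≥ sₙ ≥ 0 be real numbers, extended symmetrically by s_{−ν} = s_ν. Let a₀, …, aₙ ≥ 0 be nonnegative reals and let a₀*, …, aₙ* be the same multiset of values rearranged into the 'centrally decreasing' arrangement: for n odd, a*_{⌈n/2⌉} ≥ a*_{⌊n/2⌋} ≥ a*_{⌈n/2⌉+1} ≥ a*_{⌊n/2⌋−1} ≥ ⋯, and for n even, a*_{n/2} ≥ a*_{n/2+1} ≥ a*_{n/2−1} ≥ a*_{n/2+2} ≥ ⋯. Then Σ_{l=0}^{n} Σ_{m=0}^{n} s_{l−m} a_l a_m ≤ Σ_{l=0}^{n} Σ_{m=0}^{n} s_{l−m} a_l* a_m*. -/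
open Finset

/-- The "centrally decreasing" enumeration of the indices `0, …, n`: the `k`-th index in the
arrangement.  For `n` odd it enumerates `⌈n/2⌉, ⌊n/2⌋, ⌈n/2⌉+1, ⌊n/2⌋-1, …`; for `n` even it
enumerates `n/2, n/2+1, n/2-1, n/2+2, …`. -/
def centralIdx (n k : ℕ) : ℕ :=
  if n % 2 = 1 then (if k % 2 = 0 then n / 2 + 1 + k / 2 else n / 2 - k / 2)
  else (if k % 2 = 0 then n / 2 - k / 2 else n / 2 + 1 + k / 2)


lemma centralIdx_le (n k : ℕ) (hk : k ≤ n) : centralIdx n k ≤ n := by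
  unfold centralIdx; split_ifs <;> omega

lemma centralIdx_inj {n j k : ℕ} (hj : j ≤ n) (hk : k ≤ n)
    (h : centralIdx n j = centralIdx n k) : j = k := by
  unfold centralIdx at h; split_ifs at h <;> omega

def clo (n k : ℕ) : ℕ := if n % 2 = 1 then n / 2 + 1 - k / 2 else n / 2 - (k - 1) / 2
def chi (n k : ℕ) : ℕ := if n % 2 = 1 then n / 2 + (k + 1) / 2 else n / 2 + k / 2

lemma chi_le (n k : ℕ) (hk : k ≤ n + 1) : chi n k ≤ n := by
  unfold chi; split_ifs <;> omega

lemma chi_eq (n k : ℕ) (h1 : 1 ≤ k) (hk : k ≤ n + 1) : chi n k = clo n k + (k - 1) := by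
  unfold chi clo; split_ifs <;> omega

lemma image_central (n : ℕ) : ∀ k, 1 ≤ k → k ≤ n + 1 →
    (range k).image (centralIdx n) = Icc (clo n k) (chi n k) := by
  intro k
  induction k with
  | zero => omega
  | succ k ih =>
    intro _ hk1
    rcases Nat.eq_or_lt_of_le (show 1 ≤ k + 1 from by omega) with h1 | h1
    · have : k = 0 := by omega
      subst this
      have : centralIdx n 0 = clo n 1 ∧ centralIdx n 0 = chi n 1 := by
        unfold centralIdx clo chi; split_ifs <;> omega
      simp only [zero_add]
      ext x
      simp only [Finset.mem_image, Finset.mem_range, Finset.mem_Icc, Nat.lt_one_iff]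
      constructor
      · rintro ⟨j, hj, rfl⟩
        subst hj; omega
      · intro hx
        exact ⟨0, rfl, by omega⟩
    · have hk : 1 ≤ k := by omega
      rw [Finset.range_add_one, Finset.image_insert, ih hk (by omega)]
      have hnew : (centralIdx n k = clo n k - 1 ∧ clo n (k+1) = clo n k - 1 ∧ 1 ≤ clo n k
            ∧ chi n (k+1) = chi n k)
          ∨ (centralIdx n k = chi n k + 1 ∧ chi n (k+1) = chi n k + 1
            ∧ clo n (k+1) = clo n k) := by
        unfold centralIdx clo chi; split_ifs <;> omega
      have hlochi : clo n k ≤ chi n k := by unfold clo chi; split_ifs <;> omega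
      rcases hnew with ⟨h1, h2, h3, h4⟩ | ⟨h1, h2, h3⟩
      · rw [h1, h2, h4]; ext x; simp only [Finset.mem_insert, Finset.mem_Icc]; omega
      · rw [h1, h2, h3]; ext x; simp only [Finset.mem_insert, Finset.mem_Icc]; omega

/-- number of pairs within distance `t`. -/
def Ncnt (t : ℕ) (E F : Finset ℕ) : ℕ :=
  ∑ x ∈ E, ∑ y ∈ F, if x ≤ y + t ∧ y ≤ x + t then 1 else 0

lemma Ncnt_comm (t : ℕ) (E F : Finset ℕ) : Ncnt t E F = Ncnt t F E := by
  unfold Ncnt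
  rw [Finset.sum_comm]
  refine Finset.sum_congr rfl fun y _ => Finset.sum_congr rfl fun x _ => ?_
  simp only [and_comm]

lemma Ncnt_le_of_contract (t : ℕ) (E F : Finset ℕ) (φ : ℕ → ℕ)
    (hinj : Set.InjOn φ F) (hE : E ⊆ F)
    (hcontract : ∀ x ∈ F, ∀ y ∈ F, x ≤ y + t → φ x ≤ φ y + t) :
    Ncnt t E F ≤ Ncnt t (E.image φ) (F.image φ) := by
  unfold Ncnt
  rw [Finset.sum_image (fun x hx y hy h => hinj (hE hx) (hE hy) h)]
  refine Finset.sum_le_sum fun x hx => ?_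
  rw [Finset.sum_image (fun a ha b hb h => hinj ha hb h)]
  refine Finset.sum_le_sum fun y hy => ?_
  by_cases h : x ≤ y + t ∧ y ≤ x + t
  · rw [if_pos h, if_pos ⟨hcontract _ (hE hx) _ hy h.1, hcontract _ hy _ (hE hx) h.2⟩]
  · rw [if_neg h]
    exact Nat.zero_le _

lemma exists_interval_bound (t : ℕ) : ∀ N : ℕ, ∀ F E : Finset ℕ, E ⊆ F → ∑ x ∈ F, x ≤ N →
    ∃ E', E' ⊆ Icc 0 (F.card - 1) ∧ E'.card = E.card ∧
      Ncnt t E F ≤ Ncnt t E' (Icc 0 (F.card - 1)) := by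
  intro N
  induction N using Nat.strong_induction_on with
  | _ N ih =>
  intro F E hEF hsum
  rcases F.eq_empty_or_nonempty with rfl | hFne
  · have hE : E = ∅ := Finset.subset_empty.mp hEF
    subst hE
    exact ⟨∅, Finset.empty_subset _, rfl, by simp [Ncnt]⟩
  by_cases hgap : ∃ g, g < F.max' hFne ∧ g ∉ F
  · obtain ⟨g, hg, hgF⟩ := hgap
    set φ : ℕ → ℕ := fun x => if x < g then x else x - 1 with hφ
    have hmono : ∀ x ∈ F, ∀ y ∈ F, x ≤ y + t → φ x ≤ φ y + t := by
      intro x _ y _ h; simp only [hφ]; split_ifs <;> omega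
    have hinj : Set.InjOn φ F := by
      intro x hx y hy h
      have hx' : x ≠ g := fun e => hgF (e ▸ hx)
      have hy' : y ≠ g := fun e => hgF (e ▸ hy)
      simp only [hφ] at h; split_ifs at h <;> omega
    have hle := Ncnt_le_of_contract t E F φ hinj hEF hmono
    have hMF : F.max' hFne ∈ F := F.max'_mem hFne
    have hsumlt : ∑ x ∈ F.image φ, x < ∑ x ∈ F, x := by
      rw [Finset.sum_image (fun a ha b hb h => hinj ha hb h)]
      refine Finset.sum_lt_sum (fun i _ => by simp only [hφ]; split_ifs <;> omega)
        ⟨F.max' hFne, hMF, by simp only [hφ]; split_ifs <;> omega⟩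
    have hN : 1 ≤ N := by
      have h1 : F.max' hFne ≤ ∑ x ∈ F, x := Finset.single_le_sum (f := fun i => i) (fun i _ => Nat.zero_le i) hMF
      omega
    have hcards : (F.image φ).card = F.card := Finset.card_image_of_injOn hinj
    have hcardE : (E.image φ).card = E.card :=
      Finset.card_image_of_injOn (hinj.mono (fun x hx => hEF hx))
    obtain ⟨E', h1, h2, h3⟩ := ih (N - 1) (by omega) (F.image φ) (E.image φ)
      (Finset.image_subset_image hEF) (by omega)
    exact ⟨E', by rwa [hcards] at h1, by rw [h2, hcardE], by rw [hcards] at h3; exact le_trans hle h3⟩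
  · push_neg at hgap
    have hFI : F = Icc 0 (F.max' hFne) := by
      ext x
      simp only [Finset.mem_Icc]
      constructor
      · intro hx; exact ⟨Nat.zero_le _, F.le_max' x hx⟩
      · rintro ⟨-, hx⟩
        rcases Nat.lt_or_ge x (F.max' hFne) with h | h
        · exact hgap x h
        · have : x = F.max' hFne := le_antisymm hx h
          exact this ▸ F.max'_mem hFne
    have hcard : F.card = F.max' hFne + 1 := by
      have h := congrArg Finset.card hFI
      rwa [Nat.card_Icc, Nat.sub_zero] at h
    refine ⟨E, ?_, rfl, le_of_eq ?_⟩
    · rw [hcard]; simpa [← hFI] using hEF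
    · rw [hcard]; simp only [Nat.add_sub_cancel]; rw [← hFI]

lemma Ncnt_image_translate (t v : ℕ) (E F : Finset ℕ) :
    Ncnt t (E.image (· + v)) (F.image (· + v)) = Ncnt t E F := by
  unfold Ncnt
  rw [Finset.sum_image (fun a _ b _ h => by omega)]
  refine Finset.sum_congr rfl fun x _ => ?_
  rw [Finset.sum_image (fun a _ b _ h => by omega)]
  refine Finset.sum_congr rfl fun y _ => ?_
  refine if_congr ?_ rfl rfl
  omega

lemma Ncnt_image_reflect (t c : ℕ) (E F : Finset ℕ) (hE : ∀ x ∈ E, x ≤ c)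
    (hF : ∀ y ∈ F, y ≤ c) :
    Ncnt t (E.image (c - ·)) (F.image (c - ·)) = Ncnt t E F := by
  unfold Ncnt
  rw [Finset.sum_image (fun a ha b hb h => by have := hE a ha; have := hE b hb; omega)]
  refine Finset.sum_congr rfl fun x hx => ?_
  rw [Finset.sum_image (fun a ha b hb h => by have := hF a ha; have := hF b hb; omega)]
  refine Finset.sum_congr rfl fun y hy => ?_
  refine if_congr ?_ rfl rfl
  have := hE x hx; have := hF y hy
  omega

lemma image_add_Icc (a b v : ℕ) : (Icc a b).image (· + v) = Icc (a + v) (b + v) := by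
  ext x
  simp only [Finset.mem_image, Finset.mem_Icc]
  constructor
  · rintro ⟨y, hy, rfl⟩; omega
  · intro h; exact ⟨x - v, by omega, by omega⟩

lemma image_reflect_Icc (a b c : ℕ) (hab : a ≤ b) (hb : b ≤ c) :
    (Icc a b).image (c - ·) = Icc (c - b) (c - a) := by
  ext x
  simp only [Finset.mem_image, Finset.mem_Icc]
  constructor
  · rintro ⟨y, hy, rfl⟩; omega
  · intro h; exact ⟨c - x, by omega, by omega⟩

lemma Ncnt_left_sum (t f : ℕ) (hf : 1 ≤ f) (E : Finset ℕ) :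
    Ncnt t E (Icc 0 (f - 1)) = ∑ x ∈ E, (min (f - 1) (x + t) + 1 - (x - t)) := by
  unfold Ncnt
  refine Finset.sum_congr rfl fun x _ => ?_
  rw [← Finset.card_filter]
  have hfil : (Icc 0 (f-1)).filter (fun y => x ≤ y + t ∧ y ≤ x + t)
      = Icc (x - t) (min (f - 1) (x + t)) := by
    ext y
    simp only [Finset.mem_filter, Finset.mem_Icc]
    omega
  rw [hfil, Nat.card_Icc]

lemma sum_le_sum_of_all_le {g : ℕ → ℕ} {A B : Finset ℕ} (h : A.card = B.card)
    (hle : ∀ a ∈ A, ∀ b ∈ B, g a ≤ g b) : ∑ x ∈ A, g x ≤ ∑ x ∈ B, g x := by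
  rcases B.eq_empty_or_nonempty with rfl | hBne
  · have : A = ∅ := Finset.card_eq_zero.mp (by simpa using h)
    simp [this]
  have e := Finset.equivOfCardEq h
  calc ∑ x ∈ A, g x = ∑ i : A, g i := (Finset.sum_coe_sort A g).symm
    _ ≤ ∑ i : A, g (e i) := Finset.sum_le_sum (fun i _ => hle i i.2 (e i) (e i).2)
    _ = ∑ j : B, g j := Equiv.sum_comp e (fun j : B => g j)
    _ = ∑ x ∈ B, g x := Finset.sum_coe_sort B g

lemma sum_le_sum_of_card_eq {g : ℕ → ℕ} {A B : Finset ℕ} (h : A.card = B.card)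
    (hle : ∀ a ∈ A \ B, ∀ b ∈ B \ A, g a ≤ g b) : ∑ x ∈ A, g x ≤ ∑ x ∈ B, g x := by
  rw [← Finset.sum_inter_add_sum_sdiff A B g, ← Finset.sum_inter_add_sum_sdiff B A g]
  have hc1 := Finset.card_inter_add_card_sdiff A B
  have hc2 := Finset.card_inter_add_card_sdiff B A
  rw [Finset.inter_comm B A] at hc2
  have hcd : (A \ B).card = (B \ A).card := by omega
  have h1 : ∑ x ∈ A ∩ B, g x = ∑ x ∈ B ∩ A, g x := by rw [Finset.inter_comm]
  have h2 : ∑ x ∈ A \ B, g x ≤ ∑ x ∈ B \ A, g x := sum_le_sum_of_all_le hcd hle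
  omega

lemma ncnt_le_centered (t f : ℕ) (E : Finset ℕ) (hf : 1 ≤ f) (hE : E ⊆ Icc 0 (f - 1))
    (he : 1 ≤ E.card) :
    Ncnt t E (Icc 0 (f - 1)) ≤
      Ncnt t (Icc ((f - E.card) / 2) ((f - E.card) / 2 + E.card - 1)) (Icc 0 (f - 1)) := by
  set e := E.card with hedef
  set m := (f - e) / 2 with hmdef
  have hef : e ≤ f := by
    have := Finset.card_le_card hE
    rw [Nat.card_Icc] at this
    omega
  have hsub : Icc m (m + e - 1) ⊆ Icc 0 (f - 1) := by
    intro x hx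
    simp only [Finset.mem_Icc] at hx ⊢
    omega
  rw [Ncnt_left_sum t f hf, Ncnt_left_sum t f hf]
  apply sum_le_sum_of_card_eq
  · rw [← hedef, Nat.card_Icc]; omega
  · intro x hx y hy
    simp only [Finset.mem_sdiff, Finset.mem_Icc] at hx hy
    have hx1 : x ≤ f - 1 := by
      have := hE hx.1
      simp only [Finset.mem_Icc] at this
      omega
    omega

lemma ncnt_centered_eq (t n e f : ℕ) (he : 1 ≤ e) (hef : e ≤ f) (hf : f ≤ n + 1) :
    Ncnt t (Icc ((f - e) / 2) ((f - e) / 2 + e - 1)) (Icc 0 (f - 1))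
      = Ncnt t (Icc (clo n e) (chi n e)) (Icc (clo n f) (chi n f)) := by
  set m := (f - e) / 2 with hmdef
  have hchie := chi_eq n e he (by omega)
  have hchif := chi_eq n f (by omega) hf
  have hkey : clo n e = clo n f + m ∨ clo n e = clo n f + (f - e - m) := by
    unfold clo; split_ifs <;> omega
  rcases hkey with hk | hk
  · rw [← Ncnt_image_translate t (clo n f) (Icc m (m + e - 1)) (Icc 0 (f - 1)),
      image_add_Icc, image_add_Icc]
    congr 1 <;> [skip; skip] <;> congr 1 <;> omega
  · have hrefl : Ncnt t (Icc m (m + e - 1)) (Icc 0 (f - 1))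
        = Ncnt t (Icc (f - e - m) (f - e - m + e - 1)) (Icc 0 (f - 1)) := by
      rw [← Ncnt_image_reflect t (f - 1) (Icc m (m + e - 1)) (Icc 0 (f - 1))
        (fun x hx => by simp only [Finset.mem_Icc] at hx; omega)
        (fun y hy => by simp only [Finset.mem_Icc] at hy; omega),
        image_reflect_Icc m (m + e - 1) (f - 1) (by omega) (by omega),
        image_reflect_Icc 0 (f - 1) (f - 1) (by omega) (by omega)]
      congr 1 <;> congr 1 <;> omega
    rw [hrefl, ← Ncnt_image_translate t (clo n f) (Icc (f - e - m) (f - e - m + e - 1))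
      (Icc 0 (f - 1)), image_add_Icc, image_add_Icc]
    congr 1 <;> congr 1 <;> omega

lemma core_count (t n : ℕ) (E F : Finset ℕ) (hEF : E ⊆ F) (hF : F ⊆ Icc 0 n)
    (he : 1 ≤ E.card) (hfn : F.card ≤ n + 1) :
    Ncnt t E F ≤
      Ncnt t (Icc (clo n E.card) (chi n E.card)) (Icc (clo n F.card) (chi n F.card)) := by
  obtain ⟨E', hE'sub, hE'card, hle⟩ := exists_interval_bound t (∑ x ∈ F, x) F E hEF le_rfl
  have hef : E.card ≤ F.card := Finset.card_le_card hEF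
  have hf1 : 1 ≤ F.card := le_trans he hef
  calc Ncnt t E F ≤ Ncnt t E' (Icc 0 (F.card - 1)) := hle
    _ ≤ Ncnt t (Icc ((F.card - E.card) / 2) ((F.card - E.card) / 2 + E.card - 1))
        (Icc 0 (F.card - 1)) := by
        rw [← hE'card]
        exact ncnt_le_centered t F.card E' hf1 hE'sub (by omega)
    _ = _ := ncnt_centered_eq t n E.card F.card he hef hfn

section Helpers
variable {M : Type*} [AddCommMonoid M]

lemma sum3_swap {α β γ : Type*} (A : Finset α) (B : Finset β) (C : Finset γ)
    (f : α → β → γ → M) :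
    ∑ l ∈ A, ∑ m ∈ B, ∑ t ∈ C, f l m t = ∑ t ∈ C, ∑ l ∈ A, ∑ m ∈ B, f l m t := by
  calc ∑ l ∈ A, ∑ m ∈ B, ∑ t ∈ C, f l m t
      = ∑ l ∈ A, ∑ t ∈ C, ∑ m ∈ B, f l m t :=
        Finset.sum_congr rfl fun l _ => Finset.sum_comm
    _ = ∑ t ∈ C, ∑ l ∈ A, ∑ m ∈ B, f l m t := Finset.sum_comm

lemma sum4_swap {α β γ δ : Type*} (A : Finset α) (B : Finset β) (C : Finset γ) (D : Finset δ)
    (f : α → β → γ → δ → M) :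
    ∑ l ∈ A, ∑ m ∈ B, ∑ r ∈ C, ∑ r' ∈ D, f l m r r'
      = ∑ r ∈ C, ∑ r' ∈ D, ∑ l ∈ A, ∑ m ∈ B, f l m r r' := by
  calc ∑ l ∈ A, ∑ m ∈ B, ∑ r ∈ C, ∑ r' ∈ D, f l m r r'
      = ∑ l ∈ A, ∑ r ∈ C, ∑ r' ∈ D, ∑ m ∈ B, f l m r r' :=
        Finset.sum_congr rfl fun l _ => by
          rw [Finset.sum_comm]
          exact Finset.sum_congr rfl fun r _ => Finset.sum_comm
    _ = ∑ r ∈ C, ∑ l ∈ A, ∑ r' ∈ D, ∑ m ∈ B, f l m r r' := Finset.sum_comm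
    _ = ∑ r ∈ C, ∑ r' ∈ D, ∑ l ∈ A, ∑ m ∈ B, f l m r r' :=
        Finset.sum_congr rfl fun r _ => Finset.sum_comm

end Helpers

lemma telescope_Ico (c : ℕ → ℝ) : ∀ n j : ℕ, j ≤ n →
    ∑ r ∈ Ico j n, (c r - c (r + 1)) = c j - c n := by
  intro n
  induction n with
  | zero => intro j hj; simp [show j = 0 by omega]
  | succ n ih =>
    intro j hj
    rcases Nat.lt_or_ge j (n + 1) with h | h
    · rw [Finset.sum_Ico_succ_top (by omega), ih j (by omega)]; ring
    · have : j = n + 1 := by omega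
      subst this; simp

lemma layerT (c : ℕ → ℝ) (n j : ℕ) (hj : j ≤ n) :
    c j = c n + ∑ r ∈ range n, (if j ≤ r then c r - c (r + 1) else 0) := by
  have h1 : ∑ r ∈ range n, (if j ≤ r then c r - c (r + 1) else 0)
      = ∑ r ∈ Ico j n, (c r - c (r + 1)) := by
    rw [← Finset.sum_filter]
    congr 1
    ext r
    simp only [Finset.mem_filter, Finset.mem_range, Finset.mem_Ico]
    omega
  rw [h1, telescope_Ico c n j hj]; ring

def Bform (n t : ℕ) (x : ℕ → ℝ) : ℝ :=
  ∑ l ∈ range (n + 1), ∑ m ∈ range (n + 1),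
    if l ≤ m + t ∧ m ≤ l + t then x l * x m else 0

def Es (n : ℕ) (π : Equiv.Perm (Fin (n + 1))) (r : ℕ) : Finset ℕ :=
  ((univ : Finset (Fin (n + 1))).filter (fun l => ((π l : Fin (n + 1)) : ℕ) ≤ r)).image Fin.val

lemma Es_sub (n : ℕ) (π : Equiv.Perm (Fin (n + 1))) (r : ℕ) : Es n π r ⊆ Icc 0 n := by
  intro u hu
  simp only [Es, Finset.mem_image, Finset.mem_filter] at hu
  obtain ⟨l, _, rfl⟩ := hu
  simp only [Finset.mem_Icc]
  exact ⟨Nat.zero_le _, Fin.is_le l⟩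

lemma Es_mono (n : ℕ) (π : Equiv.Perm (Fin (n + 1))) {r r' : ℕ} (h : r ≤ r') :
    Es n π r ⊆ Es n π r' := by
  intro u hu
  simp only [Es, Finset.mem_image, Finset.mem_filter] at hu ⊢
  obtain ⟨l, hl, rfl⟩ := hu
  exact ⟨l, ⟨hl.1, le_trans hl.2 h⟩, rfl⟩

lemma Es_card (n : ℕ) (π : Equiv.Perm (Fin (n + 1))) (r : ℕ) (hr : r ≤ n) :
    (Es n π r).card = r + 1 := by
  unfold Es
  rw [Finset.card_image_of_injective _ Fin.val_injective]
  have h1 : (univ : Finset (Fin (n+1))).filter (fun l => ((π l : Fin (n+1)) : ℕ) ≤ r)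
      = ((univ : Finset (Fin (n+1))).filter (fun u : Fin (n+1) => (u : ℕ) ≤ r)).image π.symm := by
    ext l
    simp only [Finset.mem_filter, Finset.mem_image, Finset.mem_univ, true_and]
    constructor
    · intro h; exact ⟨π l, h, Equiv.symm_apply_apply π _⟩
    · rintro ⟨u, hu, rfl⟩; rwa [Equiv.apply_symm_apply]
  rw [h1, Finset.card_image_of_injective _ π.symm.injective]
  have h2 : ((univ : Finset (Fin (n+1))).filter (fun u : Fin (n+1) => (u : ℕ) ≤ r)).image Fin.val
      = range (r + 1) := by
    ext u
    simp only [Finset.mem_image, Finset.mem_filter, Finset.mem_univ, true_and,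
      Finset.mem_range]
    constructor
    · rintro ⟨l, hl, rfl⟩; omega
    · intro hu; exact ⟨⟨u, by omega⟩, by simpa using (by omega : u ≤ r), rfl⟩
  have := congrArg Finset.card h2
  rw [Finset.card_image_of_injective _ Fin.val_injective, Finset.card_range] at this
  exact this

lemma Ncnt_Es (n t r r' : ℕ) (π : Equiv.Perm (Fin (n + 1))) :
    Ncnt t (Es n π r) (Es n π r') = ∑ l : Fin (n + 1), ∑ m : Fin (n + 1),
      if ((π l : ℕ) ≤ r ∧ (π m : ℕ) ≤ r' ∧ ((l : ℕ) ≤ (m : ℕ) + t ∧ (m : ℕ) ≤ (l : ℕ) + t))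
        then 1 else 0 := by
  unfold Ncnt Es
  rw [Finset.sum_image (fun a _ b _ h => Fin.val_injective h), Finset.sum_filter]
  refine Finset.sum_congr rfl fun l _ => ?_
  by_cases h1 : ((π l : Fin (n+1)) : ℕ) ≤ r
  · rw [if_pos h1, Finset.sum_image (fun a _ b _ h => Fin.val_injective h), Finset.sum_filter]
    refine Finset.sum_congr rfl fun m _ => ?_
    by_cases h2 : ((π m : Fin (n+1)) : ℕ) ≤ r' <;> simp [h1, h2]
  · rw [if_neg h1]
    refine (Finset.sum_eq_zero fun m _ => ?_).symm
    rw [if_neg (by tauto)]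

lemma Bform_expand (n t : ℕ) (c h : ℕ → ℝ)
    (hlayer : ∀ j, j ≤ n → c j = ∑ r ∈ range (n + 1), if j ≤ r then h r else 0)
    (π : Equiv.Perm (Fin (n + 1))) (x : ℕ → ℝ)
    (hx : ∀ l : Fin (n + 1), x (l : ℕ) = c ((π l : Fin (n + 1)) : ℕ)) :
    Bform n t x = ∑ r ∈ range (n + 1), ∑ r' ∈ range (n + 1),
      h r * h r' * (Ncnt t (Es n π r) (Es n π r') : ℝ) := by
  have key : ∀ l m : Fin (n + 1),
      (if (l : ℕ) ≤ (m : ℕ) + t ∧ (m : ℕ) ≤ (l : ℕ) + t then x (l : ℕ) * x (m : ℕ) else 0)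
        = ∑ r ∈ range (n + 1), ∑ r' ∈ range (n + 1),
            (if ((π l : ℕ) ≤ r ∧ (π m : ℕ) ≤ r'
                ∧ ((l : ℕ) ≤ (m : ℕ) + t ∧ (m : ℕ) ≤ (l : ℕ) + t))
              then h r * h r' else 0) := by
    intro l m
    by_cases hc : (l : ℕ) ≤ (m : ℕ) + t ∧ (m : ℕ) ≤ (l : ℕ) + t
    · rw [if_pos hc, hx l, hx m, hlayer _ (Fin.is_le (π l)), hlayer _ (Fin.is_le (π m)),
        Finset.sum_mul_sum]
      refine Finset.sum_congr rfl fun r _ => Finset.sum_congr rfl fun r' _ => ?_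
      by_cases h1 : ((π l : Fin (n+1)) : ℕ) ≤ r <;>
        by_cases h2 : ((π m : Fin (n+1)) : ℕ) ≤ r' <;>
        simp [h1, h2, hc]
    · rw [if_neg hc]
      refine (Finset.sum_eq_zero fun r _ => Finset.sum_eq_zero fun r' _ => ?_).symm
      rw [if_neg (by tauto)]
  unfold Bform
  rw [← Fin.sum_univ_eq_sum_range (fun l => ∑ m ∈ range (n + 1),
    if l ≤ m + t ∧ m ≤ l + t then x l * x m else 0) (n + 1)]
  calc ∑ l : Fin (n + 1), ∑ m ∈ range (n + 1),
        (if (l : ℕ) ≤ m + t ∧ m ≤ (l : ℕ) + t then x (l : ℕ) * x m else 0)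
      = ∑ l : Fin (n + 1), ∑ m : Fin (n + 1),
        (if (l : ℕ) ≤ (m : ℕ) + t ∧ (m : ℕ) ≤ (l : ℕ) + t then x (l : ℕ) * x (m : ℕ) else 0) :=
        Finset.sum_congr rfl fun l _ =>
          (Fin.sum_univ_eq_sum_range (fun m =>
            if (l : ℕ) ≤ m + t ∧ m ≤ (l : ℕ) + t then x (l : ℕ) * x m else 0) (n + 1)).symm
    _ = ∑ l : Fin (n + 1), ∑ m : Fin (n + 1), ∑ r ∈ range (n + 1), ∑ r' ∈ range (n + 1),
            (if ((π l : ℕ) ≤ r ∧ (π m : ℕ) ≤ r'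
                ∧ ((l : ℕ) ≤ (m : ℕ) + t ∧ (m : ℕ) ≤ (l : ℕ) + t))
              then h r * h r' else 0) :=
        Finset.sum_congr rfl fun l _ => Finset.sum_congr rfl fun m _ => key l m
    _ = ∑ r ∈ range (n + 1), ∑ r' ∈ range (n + 1), ∑ l : Fin (n + 1), ∑ m : Fin (n + 1),
            (if ((π l : ℕ) ≤ r ∧ (π m : ℕ) ≤ r'
                ∧ ((l : ℕ) ≤ (m : ℕ) + t ∧ (m : ℕ) ≤ (l : ℕ) + t))
              then h r * h r' else 0) := sum4_swap _ _ _ _ _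
    _ = ∑ r ∈ range (n + 1), ∑ r' ∈ range (n + 1),
          h r * h r' * (Ncnt t (Es n π r) (Es n π r') : ℝ) := by
        refine Finset.sum_congr rfl fun r _ => Finset.sum_congr rfl fun r' _ => ?_
        rw [Ncnt_Es n t r r' π]
        push_cast
        rw [Finset.mul_sum]
        refine Finset.sum_congr rfl fun l _ => ?_
        rw [Finset.mul_sum]
        refine Finset.sum_congr rfl fun m _ => ?_
        split_ifs <;> ring

lemma Qdecomp (n : ℕ) (s : ℕ → ℝ) (x : ℕ → ℝ) :
    ∑ l ∈ range (n + 1), ∑ m ∈ range (n + 1), s ((l : ℤ) - (m : ℤ)).natAbs * x l * x m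
      = s n * (∑ l ∈ range (n + 1), x l) ^ 2
        + ∑ t ∈ range n, (s t - s (t + 1)) * Bform n t x := by
  have hker : ∀ l ∈ range (n + 1), ∀ m ∈ range (n + 1),
      s ((l : ℤ) - (m : ℤ)).natAbs * x l * x m
        = s n * (x l * x m) + ∑ t ∈ range n,
            (if l ≤ m + t ∧ m ≤ l + t then (s t - s (t + 1)) * (x l * x m) else 0) := by
    intro l hl m hm
    rw [Finset.mem_range] at hl hm
    have hd : ((l : ℤ) - (m : ℤ)).natAbs ≤ n := by omega
    rw [layerT s n _ hd, add_mul, add_mul, Finset.sum_mul, Finset.sum_mul]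
    congr 1
    · ring
    · refine Finset.sum_congr rfl fun u _ => ?_
      split_ifs <;> first | ring1 | (exfalso; omega)
  calc ∑ l ∈ range (n + 1), ∑ m ∈ range (n + 1), s ((l : ℤ) - (m : ℤ)).natAbs * x l * x m
      = ∑ l ∈ range (n + 1), ∑ m ∈ range (n + 1), (s n * (x l * x m) + ∑ t ∈ range n,
            (if l ≤ m + t ∧ m ≤ l + t then (s t - s (t + 1)) * (x l * x m) else 0)) :=
        Finset.sum_congr rfl fun l hl => Finset.sum_congr rfl fun m hm => hker l hl m hm
    _ = (∑ l ∈ range (n + 1), ∑ m ∈ range (n + 1), s n * (x l * x m))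
        + ∑ l ∈ range (n + 1), ∑ m ∈ range (n + 1), ∑ t ∈ range n,
            (if l ≤ m + t ∧ m ≤ l + t then (s t - s (t + 1)) * (x l * x m) else 0) := by
        simp only [Finset.sum_add_distrib]
    _ = s n * (∑ l ∈ range (n + 1), x l) ^ 2
        + ∑ t ∈ range n, (s t - s (t + 1)) * Bform n t x := by
        congr 1
        · simp_rw [← Finset.mul_sum]
          simp_rw [← Finset.sum_mul]
          rw [← sq]
        · rw [sum3_swap]
          refine Finset.sum_congr rfl fun u _ => ?_
          unfold Bform
          rw [Finset.mul_sum]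
          refine Finset.sum_congr rfl fun l _ => ?_
          rw [Finset.mul_sum]
          refine Finset.sum_congr rfl fun m _ => ?_
          split_ifs <;> ring

/-- **Quadratic form rearrangement.** Let `s₀ ≥ s₁ ≥ ⋯ ≥ sₙ ≥ 0` (extended symmetrically,
encoded by applying `s : ℕ → ℝ` at `|l - m|`), let `a₀, …, aₙ ≥ 0`, and let `a₀*, …, aₙ*` be
the same multiset of values rearranged into the centrally decreasing arrangement.  Then
`∑_{l,m} s_{l-m} a_l a_m ≤ ∑_{l,m} s_{l-m} a_l* a_m*`. -/
theorem quadratic_form_central_rearrangement (n : ℕ) (s : ℕ → ℝ)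
    (hs_anti : ∀ i j, i ≤ j → j ≤ n → s j ≤ s i) (hs_nonneg : 0 ≤ s n)
    (a astar : ℕ → ℝ) (ha : ∀ k, k ≤ n → 0 ≤ a k)
    (σ : Equiv.Perm (Fin (n + 1))) (hσ : ∀ k : Fin (n + 1), astar k = a (σ k))
    (hdec : ∀ k, k < n → astar (centralIdx n (k + 1)) ≤ astar (centralIdx n k)) :
    ∑ l ∈ range (n + 1), ∑ m ∈ range (n + 1), s ((l : ℤ) - (m : ℤ)).natAbs * a l * a m
      ≤ ∑ l ∈ range (n + 1), ∑ m ∈ range (n + 1),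
          s ((l : ℤ) - (m : ℤ)).natAbs * astar l * astar m := by
  -- the permutation given by the central enumeration
  have hlt : ∀ k : Fin (n + 1), centralIdx n (k : ℕ) < n + 1 :=
    fun k => Nat.lt_succ_of_le (centralIdx_le n (k : ℕ) (Fin.is_le k))
  set γfun : Fin (n + 1) → Fin (n + 1) := fun k => ⟨centralIdx n (k : ℕ), hlt k⟩ with hγfun
  have hγinj : Function.Injective γfun := by
    intro j k hjk
    have h1 : centralIdx n (j : ℕ) = centralIdx n (k : ℕ) := congrArg Fin.val hjk
    exact Fin.ext (centralIdx_inj (Fin.is_le j) (Fin.is_le k) h1)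
  set γ : Equiv.Perm (Fin (n + 1)) :=
    Equiv.ofBijective γfun ((Finite.injective_iff_bijective).mp hγinj) with hγdef
  have hγ : ∀ k : Fin (n + 1), ((γ k : Fin (n + 1)) : ℕ) = centralIdx n (k : ℕ) := fun k => rfl
  -- the decreasing sequence of values
  set c : ℕ → ℝ := fun j => if j ≤ n then astar (centralIdx n j) else 0 with hcdef
  set hh : ℕ → ℝ := fun r => c r - c (r + 1) with hhdef
  have hastar_nonneg : ∀ u, u ≤ n → 0 ≤ astar u := by
    intro u hu
    have h1 : astar u = a ((σ ⟨u, by omega⟩ : Fin (n + 1)) : ℕ) := hσ ⟨u, by omega⟩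
    rw [h1]
    exact ha _ (Fin.is_le _)
  have hc_nonneg : ∀ j, 0 ≤ c j := by
    intro j
    by_cases hj : j ≤ n
    · have h1 : c j = astar (centralIdx n j) := by
        simp only [hcdef]; rw [if_pos hj]
      rw [h1]; exact hastar_nonneg _ (centralIdx_le n j hj)
    · have h1 : c j = 0 := by simp only [hcdef]; rw [if_neg hj]
      rw [h1]
  have hcn1 : c (n + 1) = 0 := by simp only [hcdef]; rw [if_neg (by omega)]
  have hh_nonneg : ∀ r, r ≤ n → 0 ≤ hh r := by
    intro r hr
    rcases Nat.lt_or_ge r n with h | h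
    · have h1 : c r = astar (centralIdx n r) := by
        simp only [hcdef]; rw [if_pos (show r ≤ n by omega)]
      have h2 : c (r + 1) = astar (centralIdx n (r + 1)) := by
        simp only [hcdef]; rw [if_pos (show r + 1 ≤ n by omega)]
      simp only [hhdef, h1, h2, sub_nonneg]
      exact hdec r h
    · have hrn : r = n := by omega
      simp only [hhdef, hrn, hcn1, sub_zero]
      exact hc_nonneg n
  have hlayer : ∀ j, j ≤ n → c j = ∑ r ∈ range (n + 1), if j ≤ r then hh r else 0 := by
    intro j hj
    have h0 := layerT c (n + 1) j (by omega)
    rw [hcn1, zero_add] at h0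
    simp only [hhdef]
    exact h0
  -- the two value-permutations
  have hx_astar : ∀ l : Fin (n + 1), astar (l : ℕ) = c ((γ.symm l : Fin (n + 1)) : ℕ) := by
    intro l
    have h1 : c ((γ.symm l : Fin (n + 1)) : ℕ) = astar (centralIdx n ((γ.symm l : Fin (n+1)) : ℕ)) := by
      simp only [hcdef]; rw [if_pos (Fin.is_le (γ.symm l))]
    rw [h1]
    rw [← hγ (γ.symm l), Equiv.apply_symm_apply]
  set ρ : Equiv.Perm (Fin (n + 1)) := σ.symm.trans γ.symm with hρdef
  have hx_a : ∀ l : Fin (n + 1), a (l : ℕ) = c ((ρ l : Fin (n + 1)) : ℕ) := by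
    intro l
    have h1 := hx_astar (σ.symm l)
    have h2 := hσ (σ.symm l)
    rw [Equiv.apply_symm_apply] at h2
    rw [← h2, h1]
    rfl
  -- level sets of the central arrangement are the central intervals
  have hEsγ : ∀ r, r ≤ n → Es n γ.symm r = Icc (clo n (r + 1)) (chi n (r + 1)) := by
    intro r hr
    have h1 : Es n γ.symm r = (range (r + 1)).image (centralIdx n) := by
      ext u
      simp only [Es, Finset.mem_image, Finset.mem_filter, Finset.mem_univ, true_and,
        Finset.mem_range]
      constructor
      · rintro ⟨l, hl, rfl⟩
        refine ⟨((γ.symm l : Fin (n + 1)) : ℕ), by omega, ?_⟩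
        rw [← hγ (γ.symm l), Equiv.apply_symm_apply]
      · rintro ⟨k, hk, rfl⟩
        have hkn : k < n + 1 := by omega
        refine ⟨γ ⟨k, hkn⟩, ?_, (hγ ⟨k, hkn⟩).symm⟩
        rw [Equiv.symm_apply_apply]
        exact Nat.lt_succ_iff.mp (by simpa using hk)
    rw [h1, image_central n (r + 1) (by omega) (by omega)]
  -- comparison of the box kernels
  have hB : ∀ t, Bform n t a ≤ Bform n t astar := by
    intro t
    rw [Bform_expand n t c hh hlayer ρ a hx_a,
      Bform_expand n t c hh hlayer γ.symm astar hx_astar]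
    refine Finset.sum_le_sum fun r hr => Finset.sum_le_sum fun r' hr' => ?_
    rw [Finset.mem_range] at hr hr'
    have hrn : r ≤ n := by omega
    have hr'n : r' ≤ n := by omega
    have hcore : Ncnt t (Es n ρ r) (Es n ρ r') ≤ Ncnt t (Es n γ.symm r) (Es n γ.symm r') := by
      rw [hEsγ r hrn, hEsγ r' hr'n]
      rcases le_total r r' with hle | hle
      · have h0 := core_count t n (Es n ρ r) (Es n ρ r') (Es_mono n ρ hle) (Es_sub n ρ r')
          (by rw [Es_card n ρ r hrn]; omega) (by rw [Es_card n ρ r' hr'n]; omega)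
        rwa [Es_card n ρ r hrn, Es_card n ρ r' hr'n] at h0
      · have h0 := core_count t n (Es n ρ r') (Es n ρ r) (Es_mono n ρ hle) (Es_sub n ρ r)
          (by rw [Es_card n ρ r' hr'n]; omega) (by rw [Es_card n ρ r hrn]; omega)
        rw [Es_card n ρ r hrn, Es_card n ρ r' hr'n] at h0
        rw [Ncnt_comm t (Es n ρ r), Ncnt_comm t (Icc (clo n (r + 1)) (chi n (r + 1)))]
        exact h0
    have hcast : (Ncnt t (Es n ρ r) (Es n ρ r') : ℝ) ≤ (Ncnt t (Es n γ.symm r) (Es n γ.symm r') : ℝ) :=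
      Nat.cast_le.mpr hcore
    exact mul_le_mul_of_nonneg_left hcast (mul_nonneg (hh_nonneg r hrn) (hh_nonneg r' hr'n))
  -- equality of total sums
  have hsums : ∑ l ∈ range (n + 1), a l = ∑ l ∈ range (n + 1), astar l := by
    rw [← Fin.sum_univ_eq_sum_range (fun l => a l) (n + 1),
      ← Fin.sum_univ_eq_sum_range (fun l => astar l) (n + 1)]
    calc ∑ l : Fin (n + 1), a (l : ℕ)
        = ∑ l : Fin (n + 1), a ((σ l : Fin (n + 1)) : ℕ) :=
          (Equiv.sum_comp σ (fun l : Fin (n + 1) => a (l : ℕ))).symm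
      _ = ∑ l : Fin (n + 1), astar (l : ℕ) :=
          Finset.sum_congr rfl fun l _ => (hσ l).symm
  rw [Qdecomp n s a, Qdecomp n s astar, hsums]
  refine add_le_add le_rfl (Finset.sum_le_sum fun t ht => ?_)
  rw [Finset.mem_range] at ht
  have hcoeff : 0 ≤ s t - s (t + 1) :=
    sub_nonneg.mpr (hs_anti t (t + 1) (by omega) (by omega))
  exact mul_le_mul_of_nonneg_left (hB t) hcoeff
end

section
/- Let P(z) = a₀ + a₁z + ⋯ + aₙzⁿ with real coefficients a_k ≥ 0, let δ > 0 with nδ ≤ π, and let P*(z) = a₀* + a₁*z + ⋯ + aₙ*zⁿ where a₀*, …, aₙ* is the centrally decreasing rearrangement of a₀, …, aₙ: for n odd, a*_{⌈n/2⌉} ≥ a*_{⌊n/2⌋} ≥ a*_{⌈n/2⌉+1} ≥ a*_{⌊n/2⌋−1} ≥ ⋯, and for n even, a*_{n/2} ≥ a*_{n/2+1} ≥ a*_{n/2−1} ≥ ⋯. Then ∫_{−δ}^{δ} |P(e^{iθ})|² dθ ≤ ∫_{−δ}^{δ} |P*(e^{iθ})|² dθ. -/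
open MeasureTheory Real Finset intervalIntegral

namespace CRIC

lemma cI_le {n k : ℕ} (h : k ≤ n) : centralIdx n k ≤ n := by
  simp only [centralIdx]; split_ifs <;> omega

lemma cI_inj {n k l : ℕ} (hk : k ≤ n) (hl : l ≤ n) (h : centralIdx n k = centralIdx n l) :
    k = l := by
  simp only [centralIdx] at h; split_ifs at h <;> omega

lemma cI_image (n : ℕ) : (range (n+1)).image (centralIdx n) = range (n+1) := by
  apply Finset.eq_of_subset_of_card_le
  · intro x hx
    simp only [Finset.mem_image, Finset.mem_range] at hx ⊢
    obtain ⟨k, hk, rfl⟩ := hx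
    exact Nat.lt_succ_of_le (cI_le (Nat.lt_succ_iff.mp hk))
  · rw [Finset.card_image_of_injOn, card_range]
    intro x hx y hy hxy
    exact cI_inj (Nat.lt_succ_iff.mp (mem_range.mp hx)) (Nat.lt_succ_iff.mp (mem_range.mp hy)) hxy

/-- the pairwise distance pattern of `centralIdx` is independent of `n`. -/
lemma cI_iso {N N' k l m : ℕ} (hkN : k ≤ N) (hlN : l ≤ N) (hkN' : k ≤ N') (hlN' : l ≤ N') :
    (centralIdx N k ≤ centralIdx N l + m ∧ centralIdx N l ≤ centralIdx N k + m) ↔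
    (centralIdx N' k ≤ centralIdx N' l + m ∧ centralIdx N' l ≤ centralIdx N' k + m) := by
  simp only [centralIdx]; split_ifs <;> omega


/-- chain successor-steps into full antitonicity on an initial segment. -/
lemma anti_of_succ {α : Type*} [Preorder α] (g : ℕ → α) (N : ℕ)
    (h : ∀ k, k + 1 ≤ N → g (k+1) ≤ g k) :
    ∀ k l, k ≤ l → l ≤ N → g l ≤ g k := by
  intro k l hkl hlN
  induction l with
  | zero =>
    have : k = 0 := Nat.le_zero.mp hkl
    subst this; exact le_refl _
  | succ i ih =>
    rcases Nat.eq_or_lt_of_le hkl with rfl | hlt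
    · exact le_refl _
    · exact le_trans (h i hlN) (ih (Nat.lt_succ_iff.mp hlt) (Nat.le_of_succ_le hlN))

/-- a downward-closed subset of `range N` equals `range` of its card. -/
lemma downclosed_eq_range {S : Finset ℕ} {N : ℕ} (hS : S ⊆ range N)
    (hdc : ∀ j k, j ≤ k → k ∈ S → j ∈ S) : S = range S.card := by
  ext j
  simp only [mem_range]
  constructor
  · intro hj
    have : range (j+1) ⊆ S := fun i hi => hdc i j (Nat.lt_succ_iff.mp (mem_range.mp hi)) hj
    have := Finset.card_le_card this
    simpa using this
  · intro hj
    by_contra hjS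
    have : S ⊆ range j := by
      intro x hx
      simp only [mem_range]
      by_contra hxj
      exact hjS (hdc j x (Nat.le_of_not_lt hxj) hx)
    have := Finset.card_le_card this
    simp at this; omega
/-- an upward-closed subset of `range N` equals `Ico (N - card) N`. -/
lemma upclosed_eq_Ico {S : Finset ℕ} {N : ℕ} (hS : S ⊆ range N)
    (huc : ∀ j k, j ≤ k → k < N → j ∈ S → k ∈ S) : S = Finset.Ico (N - S.card) N := by
  ext j
  simp only [Finset.mem_Ico]
  constructor
  · intro hj
    have hjN : j < N := mem_range.mp (hS hj)
    have : Finset.Ico j N ⊆ S := by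
      intro x hx
      rw [Finset.mem_Ico] at hx
      exact huc j x hx.1 hx.2 hj
    have := Finset.card_le_card this
    rw [Nat.card_Ico] at this
    omega
  · rintro ⟨h1, h2⟩
    by_contra hjS
    have : S ⊆ Finset.Ico (j+1) N := by
      intro x hx
      have hxN : x < N := mem_range.mp (hS hx)
      rw [Finset.mem_Ico]
      refine ⟨?_, hxN⟩
      by_contra hxj
      exact hjS (huc x j (by omega) (by omega) hx)
    have := Finset.card_le_card this
    rw [Nat.card_Ico] at this
    omega

/-- sum over any subset of `range N` is at most the sum over the first `card` values,
for a function antitone on `[0, N)`. -/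
lemma sum_le_sum_range {g : ℕ → ℝ} {N : ℕ}
    (hg : ∀ k l, k ≤ l → l < N → g l ≤ g k) :
    ∀ (T : Finset ℕ), T ⊆ range N → ∑ k ∈ T, g k ≤ ∑ k ∈ range T.card, g k := by
  suffices H : ∀ c (T : Finset ℕ), T.card = c → T ⊆ range N →
      ∑ k ∈ T, g k ≤ ∑ k ∈ range T.card, g k by
    intro T hT; exact H T.card T rfl hT
  intro c
  induction c with
  | zero => intro T hc _; rw [Finset.card_eq_zero.mp hc]; simp
  | succ c ih =>
    intro T hc hT
    have hne : T.Nonempty := Finset.card_pos.mp (by omega)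
    set M := T.max' hne with hM
    have hMT : M ∈ T := T.max'_mem hne
    have hMN : M < N := mem_range.mp (hT hMT)
    have hcM : c ≤ M := by
      have : T ⊆ range (M+1) := fun x hx => mem_range.mpr (Nat.lt_succ_iff.mpr (T.le_max' x hx))
      have := Finset.card_le_card this
      simp at this; omega
    have herase : (T.erase M).card = c := by rw [Finset.card_erase_of_mem hMT]; omega
    have h1 : ∑ k ∈ T.erase M, g k ≤ ∑ k ∈ range c, g k := by
      have := ih (T.erase M) herase (fun x hx => hT (Finset.erase_subset _ _ hx))
      rwa [herase] at this
    have h2 : g M ≤ g c := hg c M hcM hMN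
    have h3 : ∑ k ∈ T.erase M, g k + g M = ∑ k ∈ T, g k := Finset.sum_erase_add T g hMT
    rw [hc, Finset.sum_range_succ]
    linarith

/-- strictly monotone maps on `Fin b` expand distances. -/
lemma strictMono_gap {b : ℕ} {f : Fin b → ℕ} (hf : StrictMono f) :
    ∀ i j : Fin b, i ≤ j → (j : ℕ) + f i ≤ (i : ℕ) + f j := by
  have key : ∀ d : ℕ, ∀ i j : Fin b, (j : ℕ) = (i : ℕ) + d → (j : ℕ) + f i ≤ (i : ℕ) + f j := by
    intro d
    induction d with
    | zero => intro i j h; have : i = j := Fin.ext (by omega); subst this; omega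
    | succ d ih =>
      intro i j h
      have hjd : (i : ℕ) + d < b := by omega
      set j' : Fin b := ⟨(i : ℕ) + d, hjd⟩ with hj'
      have h1 := ih i j' rfl
      have h2 : f j' < f j := hf (by rw [Fin.lt_def]; show (i:ℕ) + d < (j:ℕ); omega)
      have hj'v : (j' : ℕ) = (i : ℕ) + d := rfl
      omega
  intro i j hij
  exact key ((j : ℕ) - (i : ℕ)) i j (by rw [Fin.le_def] at hij; omega)


/-- window kernel -/
noncomputable def w (m i j : ℕ) : ℝ := if i ≤ j + m ∧ j ≤ i + m then 1 else 0

lemma w_nonneg (m i j : ℕ) : 0 ≤ w m i j := by unfold w; split_ifs <;> norm_num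

lemma w_symm (m i j : ℕ) : w m i j = w m j i := by
  unfold w; exact if_congr and_comm rfl rfl

lemma sum_w_range (b i m : ℕ) :
    ∑ j ∈ range b, w m i j = ((min b (i+m+1) - (i - m) : ℕ) : ℝ) := by
  unfold w
  rw [Finset.sum_boole]
  congr 1
  have : Finset.filter (fun j => i ≤ j + m ∧ j ≤ i + m) (range b)
      = Finset.Ico (i - m) (min b (i+m+1)) := by
    ext j
    simp only [Finset.mem_filter, Finset.mem_range, Finset.mem_Ico, lt_min_iff]
    omega
  rw [this, Nat.card_Ico]

lemma cnt_anti {N m k : ℕ} (h : k + 1 ≤ N) :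
    (min (N+1) (centralIdx N (k+1) + m + 1) - (centralIdx N (k+1) - m))
      ≤ (min (N+1) (centralIdx N k + m + 1) - (centralIdx N k - m)) := by
  simp only [centralIdx]; split_ifs <;> omega

lemma core {n m : ℕ} {A B : Finset ℕ} (hAB : A ⊆ B) (hB : B ⊆ range (n+1)) :
    ∑ x ∈ A, ∑ y ∈ B, w m x y ≤
    ∑ k ∈ range A.card, ∑ l ∈ range B.card, w m (centralIdx n k) (centralIdx n l) := by
  rcases B.eq_empty_or_nonempty with rfl | hBne
  · have : A = ∅ := Finset.subset_empty.mp hAB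
    subst this; simp
  set b := B.card with hbdef
  have hb1 : 1 ≤ b := Finset.card_pos.mpr hBne
  have hbn : b ≤ n + 1 := by
    have := Finset.card_le_card hB; simpa using this
  have han : A.card ≤ b := Finset.card_le_card hAB
  set e : Fin b ↪o ℕ := B.orderEmbOfFin rfl with he
  have heB : ∀ i : Fin b, e i ∈ B := fun i => Finset.orderEmbOfFin_mem B rfl i
  have hBimg : B = Finset.univ.image (fun i : Fin b => e i) := by
    apply Finset.coe_injective
    rw [Finset.coe_image, Finset.coe_univ, Set.image_univ]
    exact (Finset.range_orderEmbOfFin B rfl).symm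
  have heinj : Function.Injective (fun i : Fin b => e i) := e.injective
  set S : Finset (Fin b) := Finset.univ.filter (fun i => e i ∈ A) with hS
  have hAimg : A = S.image (fun i : Fin b => e i) := by
    ext x
    simp only [Finset.mem_image, hS, Finset.mem_filter, Finset.mem_univ, true_and]
    constructor
    · intro hx
      have hxB : x ∈ B := hAB hx
      rw [hBimg] at hxB
      simp only [Finset.mem_image, Finset.mem_univ, true_and] at hxB
      obtain ⟨i, rfl⟩ := hxB
      exact ⟨i, hx, rfl⟩
    · rintro ⟨i, hi, rfl⟩; exact hi
  have hcardA : A.card = S.card := by rw [hAimg, Finset.card_image_of_injective _ heinj]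
  -- step 1: rewrite as sums over Fin b
  have step1 : ∑ x ∈ A, ∑ y ∈ B, w m x y
      = ∑ i ∈ S, ∑ j : Fin b, w m (e i) (e j) := by
    rw [hAimg, hBimg, Finset.sum_image (fun x _ y _ h => heinj h)]
    refine Finset.sum_congr rfl fun i _ => ?_
    rw [Finset.sum_image (fun x _ y _ h => heinj h)]
  -- step 2: pointwise contraction
  have hgap : ∀ i j : Fin b, w m (e i) (e j) ≤ w m (i : ℕ) (j : ℕ) := by
    intro i j
    unfold w
    split_ifs with h1 h2
    · exact le_refl _
    · exfalso
      rcases le_total i j with hij | hij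
      · have := strictMono_gap e.strictMono i j hij
        rw [Fin.le_def] at hij
        omega
      · have := strictMono_gap e.strictMono j i hij
        rw [Fin.le_def] at hij
        omega
    · norm_num
    · exact le_refl _
  have step2 : ∑ i ∈ S, ∑ j : Fin b, w m (e i) (e j)
      ≤ ∑ i ∈ S, ∑ j : Fin b, w m (i : ℕ) (j : ℕ) :=
    Finset.sum_le_sum fun i _ => Finset.sum_le_sum fun j _ => hgap i j
  -- step 3: to ℕ sums
  set F : ℕ → ℝ := fun i => ∑ j ∈ range b, w m i j with hF
  have hFin : ∀ x : ℕ, ∑ j : Fin b, w m x (j : ℕ) = F x := by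
    intro x; rw [hF]; exact (Finset.sum_range fun j => w m x j).symm
  set T' : Finset ℕ := S.image (fun i : Fin b => (i : ℕ)) with hT'
  have hvalinj : Function.Injective (fun i : Fin b => (i : ℕ)) := Fin.val_injective
  have hT'card : T'.card = S.card := Finset.card_image_of_injective _ hvalinj
  have hT'sub : T' ⊆ range b := by
    intro x hx
    simp only [hT', Finset.mem_image] at hx
    obtain ⟨i, _, rfl⟩ := hx
    exact mem_range.mpr i.isLt
  have step3 : ∑ i ∈ S, ∑ j : Fin b, w m (i : ℕ) (j : ℕ) = ∑ i ∈ T', F i := by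
    rw [hT', Finset.sum_image (fun x _ y _ h => hvalinj h)]
    exact Finset.sum_congr rfl fun i _ => hFin (i : ℕ)
  -- step 4: reindex through centralIdx (b-1)
  have hbsucc : b - 1 + 1 = b := by omega
  set N' := b - 1 with hN'
  have hcIbij : (range b).image (centralIdx N') = range b := by
    have := cI_image N'; rwa [hbsucc] at this
  have hcIinj : ∀ x ∈ range b, ∀ y ∈ range b, centralIdx N' x = centralIdx N' y → x = y := by
    intro x hx y hy hxy
    exact cI_inj (by have := mem_range.mp hx; omega) (by have := mem_range.mp hy; omega) hxy
  set U : Finset ℕ := (range b).filter (fun u => centralIdx N' u ∈ T') with hU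
  have hUimg : T' = U.image (centralIdx N') := by
    ext x
    simp only [hU, Finset.mem_image, Finset.mem_filter]
    constructor
    · intro hx
      have hxb : x ∈ range b := hT'sub hx
      rw [← hcIbij] at hxb
      simp only [Finset.mem_image] at hxb
      obtain ⟨u, hu, rfl⟩ := hxb
      exact ⟨u, ⟨hu, hx⟩, rfl⟩
    · rintro ⟨u, ⟨_, hu2⟩, rfl⟩; exact hu2
  have hUsub : U ⊆ range b := Finset.filter_subset _ _
  have hUcard : U.card = T'.card := by
    rw [hUimg, Finset.card_image_of_injOn (fun x hx y hy => hcIinj x (hUsub hx) y (hUsub hy))]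
  set g : ℕ → ℝ := fun u => F (centralIdx N' u) with hg
  have step4 : ∑ i ∈ T', F i = ∑ u ∈ U, g u := by
    rw [hUimg, Finset.sum_image (fun x hx y hy => hcIinj x (hUsub hx) y (hUsub hy))]
  -- step 5: g is antitone on [0, b)
  have hFformula : ∀ x : ℕ, F x = ((min b (x+m+1) - (x - m) : ℕ) : ℝ) := fun x => sum_w_range b x m
  have hganti : ∀ k l, k ≤ l → l < b → g l ≤ g k := by
    have hsucc : ∀ k, k + 1 ≤ N' → g (k+1) ≤ g k := by
      intro k hk
      rw [hg]
      simp only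
      rw [hFformula, hFformula]
      have := cnt_anti (N := N') (m := m) (k := k) hk
      rw [hbsucc] at this
      exact_mod_cast this
    intro k l hkl hlb
    exact anti_of_succ g N' hsucc k l hkl (by omega)
  -- step 6: top-subset
  have step6 : ∑ u ∈ U, g u ≤ ∑ u ∈ range U.card, g u :=
    sum_le_sum_range hganti U hUsub
  have hUcard' : U.card = A.card := by rw [hUcard, hT'card, hcardA]
  -- step 7: identify with the central sums
  have step7 : ∀ k, k < A.card → g k =
      ∑ l ∈ range b, w m (centralIdx n k) (centralIdx n l) := by
    intro k hk
    have hkN' : k ≤ N' := by omega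
    have hkn : k ≤ n := by omega
    have hgk : g k = ∑ j ∈ range b, w m (centralIdx N' k) j := rfl
    rw [hgk]
    conv_lhs => rw [← hcIbij]
    rw [Finset.sum_image hcIinj]
    refine Finset.sum_congr rfl fun l hl => ?_
    have hlN' : l ≤ N' := by have := mem_range.mp hl; omega
    have hln : l ≤ n := by omega
    unfold w
    exact if_congr (cI_iso hkN' hlN' hkn hln) rfl rfl
  calc ∑ x ∈ A, ∑ y ∈ B, w m x y
      = ∑ i ∈ S, ∑ j : Fin b, w m (e i) (e j) := step1
    _ ≤ ∑ i ∈ S, ∑ j : Fin b, w m (i : ℕ) (j : ℕ) := step2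
    _ = ∑ i ∈ T', F i := step3
    _ = ∑ u ∈ U, g u := step4
    _ ≤ ∑ u ∈ range U.card, g u := step6
    _ = ∑ k ∈ range A.card, ∑ l ∈ range b, w m (centralIdx n k) (centralIdx n l) := by
        rw [hUcard']
        exact Finset.sum_congr rfl fun k hk => step7 k (mem_range.mp hk)


/-- generic layer-cake expansion of a weighted sum. -/
lemma expand {n : ℕ} (v c x : ℕ → ℝ)
    (hlc : ∀ j ∈ range (n+1), x j = ∑ i ∈ range (n+1), c i * (if v i ≤ x j then 1 else 0))
    (φ : ℕ → ℝ) :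
    ∑ j ∈ range (n+1), x j * φ j
      = ∑ i ∈ range (n+1), c i * ∑ j ∈ (range (n+1)).filter (fun j => v i ≤ x j), φ j := by
  calc ∑ j ∈ range (n+1), x j * φ j
      = ∑ j ∈ range (n+1), ∑ i ∈ range (n+1),
          c i * (if v i ≤ x j then (1:ℝ) else 0) * φ j := by
        refine Finset.sum_congr rfl fun j hj => ?_
        rw [← Finset.sum_mul]
        exact congrArg (· * φ j) (hlc j hj)
    _ = ∑ i ∈ range (n+1), ∑ j ∈ range (n+1),
          c i * (if v i ≤ x j then (1:ℝ) else 0) * φ j := Finset.sum_comm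
    _ = ∑ i ∈ range (n+1), c i * ∑ j ∈ (range (n+1)).filter (fun j => v i ≤ x j), φ j := by
        refine Finset.sum_congr rfl fun i _ => ?_
        rw [Finset.mul_sum, Finset.sum_filter]
        refine Finset.sum_congr rfl fun j _ => ?_
        split_ifs <;> ring

lemma swapped_sum (m : ℕ) (P Q : Finset ℕ) (f g : ℕ → ℕ) :
    ∑ j ∈ P, ∑ k ∈ Q, w m (f j) (g k) = ∑ k ∈ Q, ∑ j ∈ P, w m (g k) (f j) := by
  rw [Finset.sum_comm]
  exact Finset.sum_congr rfl fun k _ => Finset.sum_congr rfl fun j _ => w_symm m (f j) (g k)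

/-- the key inequality for a single window kernel. -/
lemma QM_le (n m : ℕ) (a astar : ℕ → ℝ)
    (ha : ∀ k, k ≤ n → 0 ≤ a k)
    (σ : Equiv.Perm (Fin (n + 1))) (hσ : ∀ k : Fin (n + 1), astar k = a (σ k))
    (hdec : ∀ k, k < n → astar (centralIdx n (k + 1)) ≤ astar (centralIdx n k)) :
    ∑ j ∈ range (n+1), ∑ k ∈ range (n+1), a j * (a k * w m j k) ≤
    ∑ j ∈ range (n+1), ∑ k ∈ range (n+1), astar j * (astar k * w m j k) := by
  classical
  -- sorted (ascending) list of values
  set lv : List ℝ := ((Multiset.range (n+1)).map a).sort (· ≤ ·) with hlv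
  have hlen : lv.length = n + 1 := by
    rw [hlv, Multiset.length_sort, Multiset.card_map, Multiset.card_range]
  have hsorted : lv.Pairwise (· ≤ ·) := Multiset.pairwise_sort _ _
  have hmemlv : ∀ x : ℝ, x ∈ lv ↔ ∃ j, j ≤ n ∧ a j = x := by
    intro x
    rw [hlv, Multiset.mem_sort, Multiset.mem_map]
    constructor
    · rintro ⟨j, hj, rfl⟩
      exact ⟨j, by simpa [Nat.lt_succ_iff] using Multiset.mem_range.mp hj, rfl⟩
    · rintro ⟨j, hj, rfl⟩
      exact ⟨j, Multiset.mem_range.mpr (Nat.lt_succ_iff.mpr hj), rfl⟩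
  set v : ℕ → ℝ := fun i => lv.getD (n - i) 0 with hv
  have hvget : ∀ i, i ≤ n → v i = lv[n - i]'(by omega) := by
    intro i hi
    rw [hv]
    exact List.getD_eq_getElem lv 0 (by omega)
  have hvanti : ∀ i i', i ≤ i' → i' ≤ n → v i' ≤ v i := by
    intro i i' hii hi'
    rw [hvget i (by omega), hvget i' hi']
    rcases Nat.eq_or_lt_of_le (Nat.sub_le_sub_left hii n) with heq | hlt
    · simp only [heq]; exact le_refl _
    · exact (List.pairwise_iff_getElem.mp hsorted) _ _ (by omega) (by omega) hlt
  have hvmem : ∀ i, i ≤ n → ∃ j, j ≤ n ∧ a j = v i := by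
    intro i hi
    rw [hvget i hi]
    exact (hmemlv _).mp (List.getElem_mem _)
  have hvnonneg : ∀ i, i ≤ n → 0 ≤ v i := by
    intro i hi
    obtain ⟨j, hj, hji⟩ := hvmem i hi
    rw [← hji]; exact ha j hj
  have hvsurj : ∀ x : ℝ, (∃ j, j ≤ n ∧ a j = x) → ∃ r, r ≤ n ∧ v r = x := by
    intro x hx
    obtain ⟨idx, hidx, hget⟩ := List.mem_iff_getElem.mp ((hmemlv x).mpr hx)
    refine ⟨n - idx, by omega, ?_⟩
    rw [hvget _ (by omega)]
    have : n - (n - idx) = idx := by omega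
    simp_rw [this]
    exact hget
  set c : ℕ → ℝ := fun i => if i < n then v i - v (i+1) else v n with hc
  have hcnonneg : ∀ i, i ≤ n → 0 ≤ c i := by
    intro i hi
    rw [hc]
    by_cases h : i < n
    · simp only [if_pos h]
      have := hvanti i (i+1) (by omega) (by omega)
      linarith
    · simp only [if_neg h]
      exact hvnonneg n (le_refl n)
  -- layer cake identity
  have layercake : ∀ x : ℝ, (∃ r, r ≤ n ∧ v r = x) →
      x = ∑ i ∈ range (n+1), c i * (if v i ≤ x then 1 else 0) := by
    intro x ⟨r, hr, hrx⟩
    set S : Finset ℕ := (range (n+1)).filter (fun i => v i ≤ x) with hSdef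
    have hsum : ∑ i ∈ range (n+1), c i * (if v i ≤ x then 1 else 0) = ∑ i ∈ S, c i := by
      rw [hSdef, Finset.sum_filter]
      refine Finset.sum_congr rfl fun i _ => ?_
      split_ifs <;> ring
    have huc : S = Finset.Ico (n + 1 - S.card) (n+1) := by
      refine upclosed_eq_Ico (Finset.filter_subset _ _) ?_
      intro j k hjk hkN hj
      simp only [hSdef, Finset.mem_filter, Finset.mem_range] at hj ⊢
      refine ⟨hkN, le_trans (hvanti j k hjk (by omega)) hj.2⟩
    have hrS : r ∈ S := by
      simp only [hSdef, Finset.mem_filter, Finset.mem_range]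
      exact ⟨by omega, le_of_eq hrx⟩
    have hScard : 1 ≤ S.card := Finset.card_pos.mpr ⟨r, hrS⟩
    have hScard' : S.card ≤ n + 1 := by
      have := Finset.card_le_card (Finset.filter_subset (fun i => v i ≤ x) (range (n+1)))
      simpa using this
    set i0 := n + 1 - S.card with hi0
    have hi0n : i0 ≤ n := by omega
    have hi0S : i0 ∈ S := by rw [huc]; simp [Finset.mem_Ico]; omega
    have hvi0x : v i0 ≤ x := by
      have := hi0S
      simp only [hSdef, Finset.mem_filter] at this
      exact this.2
    have hri0 : i0 ≤ r := by
      have := hrS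
      rw [huc, Finset.mem_Ico] at this
      omega
    have hvi0 : v i0 = x := by
      have h1 : v r ≤ v i0 := hvanti i0 r hri0 hr
      rw [hrx] at h1
      linarith
    rw [hsum, huc]
    -- ∑ i ∈ Ico i0 (n+1), c i = v i0
    have htel : ∑ i ∈ Finset.Ico i0 (n+1), c i = v i0 := by
      rw [Finset.sum_Ico_eq_sum_range]
      have hn1 : n + 1 - i0 = (n - i0) + 1 := by omega
      rw [hn1, Finset.sum_range_succ]
      have hlast : c (i0 + (n - i0)) = v n := by
        have : i0 + (n - i0) = n := by omega
        rw [this, hc]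
        simp
      have hbody : ∀ t ∈ range (n - i0), c (i0 + t) = v (i0 + t) - v (i0 + t + 1) := by
        intro t ht
        have := Finset.mem_range.mp ht
        rw [hc]
        simp only [if_pos (by omega : i0 + t < n)]
      rw [Finset.sum_congr rfl hbody, hlast]
      have := Finset.sum_range_sub' (fun t => v (i0 + t)) (n - i0)
      have heq : ∀ t, v (i0 + t) - v (i0 + t + 1) = (fun t => v (i0 + t)) t - (fun t => v (i0 + t)) (t+1) := by
        intro t; simp only; ring_nf
      calc ∑ t ∈ range (n - i0), (v (i0 + t) - v (i0 + t + 1)) + v n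
          = ((fun t => v (i0 + t)) 0 - (fun t => v (i0 + t)) (n - i0)) + v n := by
            rw [Finset.sum_congr rfl (fun t _ => heq t), this]
        _ = v i0 := by
            simp only
            have : i0 + (n - i0) = n := by omega
            rw [this, Nat.add_zero]
            ring
    rw [htel, hvi0]
  -- layer cake applies to a and astar ∘ centralIdx
  have hlc_a : ∀ j ∈ range (n+1), a j = ∑ i ∈ range (n+1), c i * (if v i ≤ a j then 1 else 0) := by
    intro j hj
    exact layercake (a j) (hvsurj (a j) ⟨j, Nat.lt_succ_iff.mp (Finset.mem_range.mp hj), rfl⟩)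
  set at' : ℕ → ℝ := fun k => astar (centralIdx n k) with hat
  have hastar_a : ∀ k, k ≤ n → ∃ j, j ≤ n ∧ a j = at' k := by
    intro k hk
    have h1 : centralIdx n k ≤ n := cI_le hk
    refine ⟨(σ ⟨centralIdx n k, by omega⟩ : Fin (n+1)), by omega, ?_⟩
    rw [hat]
    simp only
    rw [hσ ⟨centralIdx n k, by omega⟩]
  have hlc_at : ∀ k ∈ range (n+1), at' k = ∑ i ∈ range (n+1), c i * (if v i ≤ at' k then 1 else 0) := by
    intro k hk
    exact layercake (at' k) (hvsurj _ (hastar_a k (Nat.lt_succ_iff.mp (Finset.mem_range.mp hk))))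
  -- the level sets
  set A : ℕ → Finset ℕ := fun i => (range (n+1)).filter (fun j => v i ≤ a j) with hA
  set At : ℕ → Finset ℕ := fun i => (range (n+1)).filter (fun k => v i ≤ at' k) with hAt
  have hAsub : ∀ i, A i ⊆ range (n+1) := fun i => Finset.filter_subset _ _
  have hAnested : ∀ i i', i ≤ i' → i' ≤ n → A i ⊆ A i' := by
    intro i i' hii hi' j hj
    simp only [hA, Finset.mem_filter, Finset.mem_range] at hj ⊢
    exact ⟨hj.1, le_trans (hvanti i i' hii hi') hj.2⟩
  -- at' is antitone, so its level sets are prefixes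
  have hatanti : ∀ k l, k ≤ l → l ≤ n → at' l ≤ at' k :=
    anti_of_succ at' n (fun k hk => hdec k (by omega))
  have hprefix : ∀ i, At i = range ((At i).card) := by
    intro i
    refine downclosed_eq_range (Finset.filter_subset _ _) ?_
    intro j k hjk hk
    simp only [hAt, Finset.mem_filter, Finset.mem_range] at hk ⊢
    exact ⟨by omega, le_trans hk.2 (hatanti j k hjk (by omega))⟩
  -- cards coincide
  have himg_card : ∀ (P : ℕ → Prop) [DecidablePred P],
      ((range (n+1)).filter (fun k => P (centralIdx n k))).card
        = ((range (n+1)).filter P).card := by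
    intro P _
    have hinj : ∀ x ∈ (range (n+1)).filter (fun k => P (centralIdx n k)),
        ∀ y ∈ (range (n+1)).filter (fun k => P (centralIdx n k)),
        centralIdx n x = centralIdx n y → x = y := by
      intro x hx y hy hxy
      simp only [Finset.mem_filter, Finset.mem_range] at hx hy
      exact cI_inj (by omega) (by omega) hxy
    have himg : ((range (n+1)).filter (fun k => P (centralIdx n k))).image (centralIdx n)
        = (range (n+1)).filter P := by
      ext x
      simp only [Finset.mem_image, Finset.mem_filter, Finset.mem_range]
      constructor
      · rintro ⟨k, ⟨hk, hPk⟩, rfl⟩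
        exact ⟨Nat.lt_succ_of_le (cI_le (by omega)), hPk⟩
      · rintro ⟨hx, hPx⟩
        have hx' : x ∈ (range (n+1)).image (centralIdx n) := by
          rw [cI_image]; exact Finset.mem_range.mpr hx
        simp only [Finset.mem_image, Finset.mem_range] at hx'
        obtain ⟨k, hk, rfl⟩ := hx'
        exact ⟨k, ⟨hk, hPx⟩, rfl⟩
    rw [← himg, Finset.card_image_of_injOn hinj]
  have hperm_card : ∀ t : ℝ, ((range (n+1)).filter (fun k => t ≤ astar k)).card
      = ((range (n+1)).filter (fun j => t ≤ a j)).card := by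
    intro t
    apply Finset.card_bij (fun k hk => ((σ ⟨k, by
      simp only [Finset.mem_filter, Finset.mem_range] at hk; omega⟩ : Fin (n+1)) : ℕ))
    · intro k hk
      simp only [Finset.mem_filter, Finset.mem_range] at hk ⊢
      refine ⟨(σ _).isLt, ?_⟩
      have := hσ ⟨k, by omega⟩
      simp only at this
      rw [← this]
      exact hk.2
    · intro x hx y hy hxy
      simp only [Finset.mem_filter, Finset.mem_range] at hx hy
      have := σ.injective (Fin.val_injective hxy)
      exact congrArg Fin.val this
    · intro j hj
      simp only [Finset.mem_filter, Finset.mem_range] at hj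
      refine ⟨((σ.symm ⟨j, by omega⟩ : Fin (n+1)) : ℕ), ?_, ?_⟩
      · simp only [Finset.mem_filter, Finset.mem_range]
        refine ⟨(σ.symm _).isLt, ?_⟩
        have := hσ (σ.symm ⟨j, by omega⟩)
        rw [this]
        simp only [Equiv.apply_symm_apply]
        exact hj.2
      · simp only [Fin.eta, Equiv.apply_symm_apply]
  have hcardeq : ∀ i, (At i).card = (A i).card := by
    intro i
    rw [hAt, hA]
    have h1 := himg_card (fun k => v i ≤ astar k)
    simp only [hat]
    rw [h1, hperm_card (v i)]
  -- expansion of LHS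
  have hLHS : ∑ j ∈ range (n+1), ∑ k ∈ range (n+1), a j * (a k * w m j k)
      = ∑ i ∈ range (n+1), c i * ∑ i' ∈ range (n+1), c i' *
          (∑ j ∈ A i, ∑ k ∈ A i', w m j k) := by
    have h1 : ∀ j : ℕ, ∑ k ∈ range (n+1), a j * (a k * w m j k)
        = a j * ∑ k ∈ range (n+1), a k * w m j k := by
      intro j; rw [Finset.mul_sum]
    calc ∑ j ∈ range (n+1), ∑ k ∈ range (n+1), a j * (a k * w m j k)
        = ∑ j ∈ range (n+1), a j * (∑ k ∈ range (n+1), a k * w m j k) :=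
          Finset.sum_congr rfl fun j _ => h1 j
      _ = ∑ i ∈ range (n+1), c i * ∑ j ∈ A i, ∑ k ∈ range (n+1), a k * w m j k :=
          expand v c a hlc_a _
      _ = ∑ i ∈ range (n+1), c i * ∑ i' ∈ range (n+1), c i' *
            (∑ j ∈ A i, ∑ k ∈ A i', w m j k) := by
          refine Finset.sum_congr rfl fun i _ => ?_
          congr 1
          calc ∑ j ∈ A i, ∑ k ∈ range (n+1), a k * w m j k
              = ∑ j ∈ A i, ∑ i' ∈ range (n+1), c i' * ∑ k ∈ A i', w m j k :=
                Finset.sum_congr rfl fun j _ => expand v c a hlc_a _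
            _ = ∑ i' ∈ range (n+1), ∑ j ∈ A i, c i' * ∑ k ∈ A i', w m j k :=
                Finset.sum_comm
            _ = ∑ i' ∈ range (n+1), c i' * (∑ j ∈ A i, ∑ k ∈ A i', w m j k) := by
                refine Finset.sum_congr rfl fun i' _ => ?_
                rw [Finset.mul_sum]
  -- expansion of RHS
  have hreidx : ∀ f : ℕ → ℝ, ∑ j ∈ range (n+1), f j
      = ∑ j ∈ range (n+1), f (centralIdx n j) := by
    intro f
    conv_lhs => rw [← cI_image n]
    rw [Finset.sum_image]
    intro x hx y hy hxy
    exact cI_inj (by have := Finset.mem_range.mp hx; omega)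
      (by have := Finset.mem_range.mp hy; omega) hxy
  have hRHS : ∑ j ∈ range (n+1), ∑ k ∈ range (n+1), astar j * (astar k * w m j k)
      = ∑ i ∈ range (n+1), c i * ∑ i' ∈ range (n+1), c i' *
          (∑ j ∈ range ((A i).card), ∑ k ∈ range ((A i').card),
            w m (centralIdx n j) (centralIdx n k)) := by
    calc ∑ j ∈ range (n+1), ∑ k ∈ range (n+1), astar j * (astar k * w m j k)
        = ∑ j ∈ range (n+1), ∑ k ∈ range (n+1),
            at' j * (at' k * w m (centralIdx n j) (centralIdx n k)) := by
          rw [hreidx (fun j => ∑ k ∈ range (n+1), astar j * (astar k * w m j k))]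
          refine Finset.sum_congr rfl fun j _ => ?_
          rw [hreidx (fun k => astar (centralIdx n j) * (astar k * w m (centralIdx n j) k))]
      _ = ∑ i ∈ range (n+1), c i * ∑ i' ∈ range (n+1), c i' *
            (∑ j ∈ At i, ∑ k ∈ At i', w m (centralIdx n j) (centralIdx n k)) := by
          calc ∑ j ∈ range (n+1), ∑ k ∈ range (n+1),
                  at' j * (at' k * w m (centralIdx n j) (centralIdx n k))
              = ∑ j ∈ range (n+1), at' j * (∑ k ∈ range (n+1),
                  at' k * w m (centralIdx n j) (centralIdx n k)) :=
                Finset.sum_congr rfl fun j _ => by rw [Finset.mul_sum]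
            _ = ∑ i ∈ range (n+1), c i * ∑ j ∈ At i, ∑ k ∈ range (n+1),
                  at' k * w m (centralIdx n j) (centralIdx n k) :=
                expand v c at' hlc_at _
            _ = _ := by
                refine Finset.sum_congr rfl fun i _ => ?_
                congr 1
                calc ∑ j ∈ At i, ∑ k ∈ range (n+1),
                        at' k * w m (centralIdx n j) (centralIdx n k)
                    = ∑ j ∈ At i, ∑ i' ∈ range (n+1), c i' * ∑ k ∈ At i',
                        w m (centralIdx n j) (centralIdx n k) :=
                      Finset.sum_congr rfl fun j _ => expand v c at' hlc_at _
                  _ = ∑ i' ∈ range (n+1), ∑ j ∈ At i, c i' * ∑ k ∈ At i',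
                        w m (centralIdx n j) (centralIdx n k) := Finset.sum_comm
                  _ = ∑ i' ∈ range (n+1), c i' * (∑ j ∈ At i, ∑ k ∈ At i',
                        w m (centralIdx n j) (centralIdx n k)) :=
                      Finset.sum_congr rfl fun i' _ => by rw [Finset.mul_sum]
      _ = ∑ i ∈ range (n+1), c i * ∑ i' ∈ range (n+1), c i' *
            (∑ j ∈ range ((A i).card), ∑ k ∈ range ((A i').card),
              w m (centralIdx n j) (centralIdx n k)) := by
          refine Finset.sum_congr rfl fun i _ => ?_
          congr 1
          refine Finset.sum_congr rfl fun i' _ => ?_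
          congr 1
          rw [hprefix i, hprefix i', hcardeq i, hcardeq i']
  -- termwise comparison
  rw [hLHS, hRHS]
  refine Finset.sum_le_sum fun i hi => ?_
  have hci : 0 ≤ c i := hcnonneg i (Nat.lt_succ_iff.mp (Finset.mem_range.mp hi))
  refine mul_le_mul_of_nonneg_left ?_ hci
  refine Finset.sum_le_sum fun i' hi' => ?_
  have hci' : 0 ≤ c i' := hcnonneg i' (Nat.lt_succ_iff.mp (Finset.mem_range.mp hi'))
  refine mul_le_mul_of_nonneg_left ?_ hci'
  have hin : i' ≤ n ∨ i ≤ n := by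
    left; exact Nat.lt_succ_iff.mp (Finset.mem_range.mp hi')
  rcases le_total i i' with hii | hii
  · -- A i ⊆ A i'
    have hsub := hAnested i i' hii (Nat.lt_succ_iff.mp (Finset.mem_range.mp hi'))
    exact core hsub (hAsub i')
  · -- A i' ⊆ A i ; swap
    have hsub := hAnested i' i hii (Nat.lt_succ_iff.mp (Finset.mem_range.mp hi))
    have h1 := swapped_sum m (A i) (A i') id id
    simp only [id] at h1
    rw [h1]
    have h2 := swapped_sum m (range ((A i).card)) (range ((A i').card))
      (centralIdx n) (centralIdx n)
    rw [h2]
    exact core hsub (hAsub i)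


/-- pointwise expansion of the squared modulus -/
lemma term_re (xj xk : ℝ) (j k : ℕ) (θ : ℝ) :
    (((xj:ℂ) * Complex.exp (Complex.I * j * θ)) *
      (starRingEnd ℂ) ((xk:ℂ) * Complex.exp (Complex.I * k * θ))).re
    = xj * (xk * Real.cos ((Nat.dist j k : ℝ) * θ)) := by
  have h1 : (starRingEnd ℂ) ((xk:ℂ) * Complex.exp (Complex.I * k * θ))
      = (xk:ℂ) * Complex.exp (-(Complex.I * k * θ)) := by
    rw [map_mul, ← Complex.exp_conj]
    congr 1
    · exact Complex.conj_ofReal xk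
    · simp [map_mul, Complex.conj_I]
  rw [h1, mul_mul_mul_comm, ← Complex.ofReal_mul, ← Complex.exp_add]
  have h2 : Complex.I * j * θ + -(Complex.I * k * θ) = (((j:ℝ) - k) * θ : ℝ) * Complex.I := by
    push_cast; ring
  rw [h2, Complex.re_ofReal_mul, Complex.exp_ofReal_mul_I_re]
  have h3 : Real.cos (((j:ℝ) - k) * θ) = Real.cos ((Nat.dist j k : ℝ) * θ) := by
    rcases le_total j k with h | h
    · have hd : (Nat.dist j k : ℝ) = (k : ℝ) - j := by
        rw [Nat.dist_eq_sub_of_le h]; push_cast [h]; ring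
      rw [hd, show ((j:ℝ) - k) * θ = -(((k:ℝ) - j) * θ) by ring, Real.cos_neg]
    · have hd : (Nat.dist j k : ℝ) = (j : ℝ) - k := by
        rw [Nat.dist_comm, Nat.dist_eq_sub_of_le h]; push_cast [h]; ring
      rw [hd]
  rw [h3]; ring

lemma norm_sq_expand (n : ℕ) (x : ℕ → ℝ) (θ : ℝ) :
    ‖∑ k ∈ range (n + 1), (x k : ℂ) * Complex.exp (Complex.I * (k : ℂ) * (θ : ℂ))‖ ^ 2
    = ∑ j ∈ range (n+1), ∑ k ∈ range (n+1),
        x j * (x k * Real.cos ((Nat.dist j k : ℝ) * θ)) := by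
  set z := ∑ k ∈ range (n + 1), (x k : ℂ) * Complex.exp (Complex.I * (k : ℂ) * (θ : ℂ)) with hz
  have h1 : ‖z‖ ^ 2 = (z * (starRingEnd ℂ) z).re := by
    rw [Complex.mul_conj, Complex.ofReal_re, Complex.sq_norm]
  rw [h1, hz, map_sum, Finset.sum_mul_sum, Complex.re_sum]
  refine Finset.sum_congr rfl fun j _ => ?_
  rw [Complex.re_sum]
  refine Finset.sum_congr rfl fun k _ => ?_
  exact term_re (x j) (x k) j k θ

lemma integral_norm_sq (n : ℕ) (x : ℕ → ℝ) (δ : ℝ) :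
    (∫ θ in (-δ)..δ,
        ‖∑ k ∈ range (n + 1), (x k : ℂ) * Complex.exp (Complex.I * (k : ℂ) * (θ : ℂ))‖ ^ 2)
    = ∑ j ∈ range (n+1), ∑ k ∈ range (n+1),
        x j * (x k * (∫ θ in (-δ)..δ, Real.cos ((Nat.dist j k : ℝ) * θ))) := by
  have hcont : ∀ (c : ℝ), Continuous (fun θ : ℝ => Real.cos (c * θ)) := by
    intro c; fun_prop
  calc (∫ θ in (-δ)..δ,
        ‖∑ k ∈ range (n + 1), (x k : ℂ) * Complex.exp (Complex.I * (k : ℂ) * (θ : ℂ))‖ ^ 2)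
      = ∫ θ in (-δ)..δ, ∑ j ∈ range (n+1), ∑ k ∈ range (n+1),
          x j * (x k * Real.cos ((Nat.dist j k : ℝ) * θ)) := by
        refine intervalIntegral.integral_congr fun θ _ => ?_
        exact norm_sq_expand n x θ
    _ = ∑ j ∈ range (n+1), ∫ θ in (-δ)..δ, ∑ k ∈ range (n+1),
          x j * (x k * Real.cos ((Nat.dist j k : ℝ) * θ)) := by
        refine intervalIntegral.integral_finset_sum fun j _ => ?_
        apply Continuous.intervalIntegrable
        fun_prop
    _ = ∑ j ∈ range (n+1), ∑ k ∈ range (n+1), ∫ θ in (-δ)..δ,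
          x j * (x k * Real.cos ((Nat.dist j k : ℝ) * θ)) := by
        refine Finset.sum_congr rfl fun j _ => ?_
        refine intervalIntegral.integral_finset_sum fun k _ => ?_
        apply Continuous.intervalIntegrable
        fun_prop
    _ = ∑ j ∈ range (n+1), ∑ k ∈ range (n+1),
          x j * (x k * (∫ θ in (-δ)..δ, Real.cos ((Nat.dist j k : ℝ) * θ))) := by
        refine Finset.sum_congr rfl fun j _ => Finset.sum_congr rfl fun k _ => ?_
        rw [intervalIntegral.integral_const_mul, intervalIntegral.integral_const_mul]

lemma s_zero (δ : ℝ) : (∫ θ in (-δ)..δ, Real.cos ((0:ℕ) * θ)) = 2 * δ := by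
  simp only [Nat.cast_zero, zero_mul, Real.cos_zero]
  rw [intervalIntegral.integral_const]
  simp [smul_eq_mul]
  ring

lemma s_pos_formula (δ : ℝ) (d : ℕ) (hd : 0 < d) :
    (∫ θ in (-δ)..δ, Real.cos ((d:ℝ) * θ)) = 2 * Real.sin ((d:ℝ) * δ) / d := by
  have hdne : (d:ℝ) ≠ 0 := by positivity
  rw [intervalIntegral.integral_comp_mul_left Real.cos hdne, integral_cos]
  rw [mul_neg, Real.sin_neg, smul_eq_mul]
  field_simp
  ring

lemma s_nonneg {n d : ℕ} {δ : ℝ} (hδ : 0 < δ) (hnδ : (n:ℝ) * δ ≤ π) (hd : d ≤ n) :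
    0 ≤ ∫ θ in (-δ)..δ, Real.cos ((d:ℝ) * θ) := by
  rcases Nat.eq_zero_or_pos d with rfl | hd0
  · rw [s_zero]; positivity
  · rw [s_pos_formula δ d hd0]
    have h1 : 0 ≤ (d:ℝ) * δ := by positivity
    have h2 : (d:ℝ) * δ ≤ π := by
      calc (d:ℝ) * δ ≤ (n:ℝ) * δ := by
            apply mul_le_mul_of_nonneg_right _ (le_of_lt hδ)
            exact_mod_cast hd
        _ ≤ π := hnδ
    have := Real.sin_nonneg_of_nonneg_of_le_pi h1 h2
    positivity

lemma s_anti {n d d' : ℕ} {δ : ℝ} (hδ : 0 < δ) (hnδ : (n:ℝ) * δ ≤ π)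
    (hdd : d ≤ d') (hd' : d' ≤ n) :
    (∫ θ in (-δ)..δ, Real.cos ((d':ℝ) * θ)) ≤ ∫ θ in (-δ)..δ, Real.cos ((d:ℝ) * θ) := by
  have hbound : ∀ e : ℕ, e ≤ n → 0 ≤ (e:ℝ) * δ ∧ (e:ℝ) * δ ≤ π := by
    intro e he
    constructor
    · positivity
    · calc (e:ℝ) * δ ≤ (n:ℝ) * δ := by
            apply mul_le_mul_of_nonneg_right _ (le_of_lt hδ)
            exact_mod_cast he
        _ ≤ π := hnδ
  rcases Nat.eq_zero_or_pos d with rfl | hd0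
  · rcases Nat.eq_zero_or_pos d' with rfl | hd'0
    · exact le_refl _
    · rw [s_zero, s_pos_formula δ d' hd'0]
      obtain ⟨h1, h2⟩ := hbound d' hd'
      have hsin := Real.sin_le h1
      have hd'pos : (0:ℝ) < d' := by exact_mod_cast hd'0
      rw [div_le_iff₀ hd'pos]
      calc 2 * Real.sin ((d':ℝ) * δ) ≤ 2 * ((d':ℝ) * δ) := by linarith
        _ = 2 * δ * d' := by ring
  · have hd'0 : 0 < d' := lt_of_lt_of_le hd0 hdd
    rw [s_pos_formula δ d hd0, s_pos_formula δ d' hd'0]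
    have hdpos : (0:ℝ) < d := by exact_mod_cast hd0
    have hd'pos : (0:ℝ) < d' := by exact_mod_cast hd'0
    rw [div_le_div_iff₀ hd'pos hdpos]
    -- key : d * sin(d'δ) ≤ d' * sin(dδ)
    have key : (d:ℝ) * Real.sin ((d':ℝ) * δ) ≤ (d':ℝ) * Real.sin ((d:ℝ) * δ) := by
      rcases Nat.eq_or_lt_of_le hdd with rfl | hlt
      · ring_nf; exact le_refl _
      · obtain ⟨h1, h2⟩ := hbound d' hd'
        set t : ℝ := (d:ℝ) / d' with ht
        have ht0 : 0 ≤ t := by positivity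
        have ht1 : t ≤ 1 := by
          rw [ht, div_le_one hd'pos]; exact_mod_cast hdd
        have hmem0 : (0:ℝ) ∈ Set.Icc 0 π := by
          constructor; exact le_refl _; exact le_of_lt Real.pi_pos
        have hmem1 : (d':ℝ) * δ ∈ Set.Icc 0 π := ⟨h1, h2⟩
        have hconc := strictConcaveOn_sin_Icc.concaveOn.2 hmem0 hmem1
          (by linarith : (0:ℝ) ≤ 1 - t) ht0 (by ring)
        simp only [smul_eq_mul, mul_zero, Real.sin_zero, zero_add, mul_zero, add_zero] at hconc
        have htmul : t * ((d':ℝ) * δ) = (d:ℝ) * δ := by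
          rw [ht]; field_simp
        rw [htmul] at hconc
        have := mul_le_mul_of_nonneg_left hconc (le_of_lt hd'pos)
        calc (d:ℝ) * Real.sin ((d':ℝ) * δ) = (d':ℝ) * (t * Real.sin ((d':ℝ) * δ)) := by
              rw [ht]; field_simp
          _ ≤ (d':ℝ) * Real.sin ((d:ℝ) * δ) := this
    calc 2 * Real.sin ((d':ℝ) * δ) * (d:ℝ) = 2 * ((d:ℝ) * Real.sin ((d':ℝ) * δ)) := by ring
      _ ≤ 2 * ((d':ℝ) * Real.sin ((d:ℝ) * δ)) := by linarith
      _ = 2 * Real.sin ((d:ℝ) * δ) * (d':ℝ) := by ring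


lemma w_dist (m j k : ℕ) : (if Nat.dist j k ≤ m then (1:ℝ) else 0) = w m j k := by
  unfold w
  refine if_congr ?_ rfl rfl
  unfold Nat.dist
  omega

lemma telescope (n : ℕ) (s cs : ℕ → ℝ)
    (hcs : ∀ m, cs m = if m < n then s m - s (m+1) else s n) :
    ∀ d, d ≤ n → s d = ∑ m ∈ range (n+1), cs m * (if d ≤ m then 1 else 0) := by
  intro d hd
  have h1 : ∑ m ∈ range (n+1), cs m * (if d ≤ m then (1:ℝ) else 0)
      = ∑ m ∈ Finset.Ico d (n+1), cs m := by
    have hfil : Finset.Ico d (n+1) = (range (n+1)).filter (fun m => d ≤ m) := by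
      ext m; simp only [Finset.mem_Ico, Finset.mem_filter, Finset.mem_range]; omega
    rw [hfil, Finset.sum_filter]
    refine Finset.sum_congr rfl fun m _ => ?_
    split_ifs <;> ring
  rw [h1, Finset.sum_Ico_eq_sum_range]
  have hn1 : n + 1 - d = (n - d) + 1 := by omega
  rw [hn1, Finset.sum_range_succ]
  have hlast : cs (d + (n - d)) = s n := by
    rw [hcs]
    have : d + (n - d) = n := by omega
    rw [this]
    simp
  have hbody : ∀ t ∈ range (n - d), cs (d + t) = s (d + t) - s (d + (t + 1)) := by
    intro t ht
    have := Finset.mem_range.mp ht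
    rw [hcs]
    simp only [if_pos (by omega : d + t < n)]
    rw [Nat.add_assoc]
  rw [Finset.sum_congr rfl hbody, hlast]
  have htel := Finset.sum_range_sub' (fun t => s (d + t)) (n - d)
  rw [htel]
  have : d + (n - d) = n := by omega
  rw [this, Nat.add_zero]
  ring

lemma window_split (n : ℕ) (x : ℕ → ℝ) (s cs : ℕ → ℝ)
    (hdecomp : ∀ d, d ≤ n → s d = ∑ m ∈ range (n+1), cs m * (if d ≤ m then 1 else 0)) :
    ∑ j ∈ range (n+1), ∑ k ∈ range (n+1), x j * (x k * s (Nat.dist j k))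
    = ∑ m ∈ range (n+1), cs m *
        ∑ j ∈ range (n+1), ∑ k ∈ range (n+1), x j * (x k * w m j k) := by
  calc ∑ j ∈ range (n+1), ∑ k ∈ range (n+1), x j * (x k * s (Nat.dist j k))
      = ∑ j ∈ range (n+1), ∑ k ∈ range (n+1), ∑ m ∈ range (n+1),
          x j * (x k * (cs m * (if Nat.dist j k ≤ m then 1 else 0))) := by
        refine Finset.sum_congr rfl fun j hj => Finset.sum_congr rfl fun k hk => ?_
        have hjn := Finset.mem_range.mp hj
        have hkn := Finset.mem_range.mp hk
        have hdn : Nat.dist j k ≤ n := by unfold Nat.dist; omega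
        rw [hdecomp (Nat.dist j k) hdn, Finset.mul_sum, Finset.mul_sum]
    _ = ∑ j ∈ range (n+1), ∑ m ∈ range (n+1), ∑ k ∈ range (n+1),
          x j * (x k * (cs m * (if Nat.dist j k ≤ m then 1 else 0))) :=
        Finset.sum_congr rfl fun j _ => Finset.sum_comm
    _ = ∑ m ∈ range (n+1), ∑ j ∈ range (n+1), ∑ k ∈ range (n+1),
          x j * (x k * (cs m * (if Nat.dist j k ≤ m then 1 else 0))) := Finset.sum_comm
    _ = ∑ m ∈ range (n+1), cs m *
          ∑ j ∈ range (n+1), ∑ k ∈ range (n+1), x j * (x k * w m j k) := by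
        refine Finset.sum_congr rfl fun m _ => ?_
        rw [Finset.mul_sum]
        refine Finset.sum_congr rfl fun j _ => ?_
        rw [Finset.mul_sum]
        refine Finset.sum_congr rfl fun k _ => ?_
        rw [← w_dist m j k]
        ring

end CRIC

open CRIC in
/-- **Rearrangement increases the concentration on the symmetric arc.** Let
`P(z) = a₀ + ⋯ + aₙ zⁿ` with real coefficients `a_k ≥ 0`, let `δ > 0` with `nδ ≤ π`, and let
`P*` have coefficients `a₀*, …, aₙ*`, the centrally decreasing rearrangement of `a₀, …, aₙ`.
Then `∫_{-δ}^{δ} |P(e^{iθ})|² dθ ≤ ∫_{-δ}^{δ} |P*(e^{iθ})|² dθ`. -/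
theorem central_rearrangement_increases_concentration (n : ℕ) (a astar : ℕ → ℝ)
    (ha : ∀ k, k ≤ n → 0 ≤ a k)
    (δ : ℝ) (hδ : 0 < δ) (hnδ : (n : ℝ) * δ ≤ π)
    (σ : Equiv.Perm (Fin (n + 1))) (hσ : ∀ k : Fin (n + 1), astar k = a (σ k))
    (hdec : ∀ k, k < n → astar (centralIdx n (k + 1)) ≤ astar (centralIdx n k)) :
    (∫ θ in (-δ)..δ,
        ‖∑ k ∈ range (n + 1), (a k : ℂ) * Complex.exp (Complex.I * (k : ℂ) * (θ : ℂ))‖ ^ 2)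
      ≤ ∫ θ in (-δ)..δ,
        ‖∑ k ∈ range (n + 1), (astar k : ℂ) * Complex.exp (Complex.I * (k : ℂ) * (θ : ℂ))‖ ^ 2 := by
  rw [integral_norm_sq n a δ, integral_norm_sq n astar δ]
  set s : ℕ → ℝ := fun d => ∫ θ in (-δ)..δ, Real.cos ((d:ℝ) * θ) with hs
  have hid : ∀ x : ℕ → ℝ, ∑ j ∈ range (n+1), ∑ k ∈ range (n+1),
      x j * (x k * (∫ θ in (-δ)..δ, Real.cos ((Nat.dist j k : ℝ) * θ)))
      = ∑ j ∈ range (n+1), ∑ k ∈ range (n+1), x j * (x k * s (Nat.dist j k)) := fun x => rfl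
  rw [hid a, hid astar]
  set cs : ℕ → ℝ := fun m => if m < n then s m - s (m+1) else s n with hcs
  rw [window_split n a s cs (telescope n s cs (fun m => rfl)),
      window_split n astar s cs (telescope n s cs (fun m => rfl))]
  refine Finset.sum_le_sum fun m hm => ?_
  have hmn : m ≤ n := Nat.lt_succ_iff.mp (Finset.mem_range.mp hm)
  have hcsm : 0 ≤ cs m := by
    rw [hcs]
    simp only
    split_ifs with h
    · have := s_anti (n := n) hδ hnδ (Nat.le_succ m) (by omega : m + 1 ≤ n)
      rw [hs]
      simp only
      linarith [this]
    · exact s_nonneg (n := n) hδ hnδ (le_refl n)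
  exact mul_le_mul_of_nonneg_left (QM_le n m a astar ha σ hσ hdec) hcsm
end
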